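/- arXiv:2605.24327 — 8 statements merged into one kernel-verified Lean document; each statement's English description precedes it below -/
import Mathlib

section
/- Let (G,∼) be an acyclic turbulence chart (i.e., one with no bands). Then the turbulence polyhedron F₁(G,∼) is bounded. -/
open Finset

/-- A turbulence chart: a finite undirected graph given by half-edges `H` with a
fixed-point-free involution `op` pairing half-edges into edges, a vertex map `vert`,
and at each internal vertex a partition of its half-edges into two nonempty classes,
encoded by `side : H → Bool`. -/
structure TurbChart where
  V : Type
  H : Type
  [fintV : Fintype V]
  [decV : DecidableEq V]
  [fintH : Fintype H]
  [decH : DecidableEq H]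
  vert : H → V
  op : H → H
  side : H → Bool
  op_op : ∀ h, op (op h) = h
  op_ne : ∀ h, op h ≠ h
  vert_cover : ∀ v, ∃ h, vert h = v
  sides_nonempty : ∀ v,
    2 ≤ (Finset.univ.filter fun h => vert h = v).card →
    ∀ b : Bool, ∃ h, vert h = v ∧ side h = b

attribute [instance] TurbChart.fintV TurbChart.decV TurbChart.fintH TurbChart.decH

namespace TurbChart

variable (T : TurbChart)

def degree (v : T.V) : ℕ := (Finset.univ.filter fun h => T.vert h = v).card

def Fringe (v : T.V) : Prop := T.degree v = 1

def Internal (v : T.V) : Prop := 2 ≤ T.degree v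

instance : DecidablePred T.Fringe := fun v =>
  decidable_of_iff (T.degree v = 1) Iff.rfl

instance : DecidablePred T.Internal := fun v =>
  decidable_of_iff (2 ≤ T.degree v) Iff.rfl

/-- A flow on a turbulence chart: a labelling of edges (encoded as an `op`-invariant
function on half-edges) conserving flow across the two classes at each internal vertex. -/
def IsFlow (F : T.H → ℝ) : Prop :=
  (∀ h, F (T.op h) = F h) ∧
  ∀ v, T.Internal v →
    ∑ h ∈ Finset.univ.filter (fun h => T.vert h = v ∧ T.side h = true), F h =
    ∑ h ∈ Finset.univ.filter (fun h => T.vert h = v ∧ T.side h = false), F h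

/-- The strength of a flow: half the sum of its values over fringe incidences. -/
noncomputable def strength (F : T.H → ℝ) : ℝ :=
  (1 / 2) * ∑ h ∈ Finset.univ.filter (fun h => T.Fringe (T.vert h)), F h

/-- The turbulence polyhedron `F₁(G,∼)`: nonnegative flows of strength 1. -/
def unitFlows : Set (T.H → ℝ) :=
  {F | T.IsFlow F ∧ (∀ h, 0 ≤ F h) ∧ T.strength F = 1}

/-- A string: a walk along oriented edges (an oriented edge is encoded by its tail
half-edge `a`, its head half-edge being `op a`) which crosses the class partition at
each internal vertex it passes through. -/
def IsString (l : List T.H) : Prop :=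
  List.Chain' (fun a b => T.vert (T.op a) = T.vert b ∧ T.side (T.op a) ≠ T.side b) l

/-- A route: a nonempty string starting and ending at fringe vertices. -/
def IsRoute (l : List T.H) : Prop :=
  T.IsString l ∧ l ≠ [] ∧
  (∀ h ∈ l.head?, T.Fringe (T.vert h)) ∧
  (∀ h ∈ l.getLast?, T.Fringe (T.vert (T.op h)))

/-- A band: a nonempty cyclically composable string which is not a proper power. -/
def IsBand (l : List T.H) : Prop :=
  l ≠ [] ∧ T.IsString (l ++ l) ∧
  ¬ ∃ (c : List T.H) (k : ℕ), 2 ≤ k ∧ l = (List.replicate k c).flatten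

def Acyclic : Prop := ¬ ∃ l, T.IsBand l

/-- The indicator vector of a walk: multiplicity of each edge (in either orientation). -/
noncomputable def indic (l : List T.H) : T.H → ℝ :=
  fun h => ((l.count h + l.count (T.op h) : ℕ) : ℝ)

/-- The inverse of a string. -/
def inv (l : List T.H) : List T.H := (l.map T.op).reverse

end TurbChart

/-- A framing on a turbulence chart: a linear order on each class of half-edges. -/
structure Framing (T : TurbChart) where
  lt : T.H → T.H → Prop
  lt_irrefl : ∀ h, ¬ lt h h
  lt_trans : ∀ a b c, lt a b → lt b c → lt a c
  lt_compat : ∀ a b, lt a b → T.vert a = T.vert b ∧ T.side a = T.side b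
  lt_total : ∀ a b, a ≠ b → T.vert a = T.vert b → T.side a = T.side b →
    lt a b ∨ lt b a

namespace TurbChart

variable (T : TurbChart)

/-- Substrings of a trail (a route, or a band where substrings of any power are allowed),
up to inverses. -/
def Substr (t : List T.H) (isBand : Bool) (s : List T.H) : Prop :=
  if isBand then
    ∃ k : ℕ, s <:+: (List.replicate k t).flatten ∨ s <:+: T.inv (List.replicate k t).flatten
  else s <:+: t ∨ s <:+: T.inv t

/-- `p` contains the "low" member of an incompatibility whose "high" member lies in `q`. -/
def IsIncompatPair (R : Framing T) (p q : List T.H × Bool) : Prop :=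
  ∃ (e₁ e₂ f₁ f₂ : T.H) (s : List T.H),
    R.lt (T.op e₁) (T.op e₂) ∧ R.lt f₁ f₂ ∧
    T.IsString (e₁ :: (s ++ [f₁])) ∧ T.IsString (e₂ :: (s ++ [f₂])) ∧
    T.Substr p.1 p.2 (e₁ :: (s ++ [f₁])) ∧ T.Substr q.1 q.2 (e₂ :: (s ++ [f₂]))

def Compatible (R : Framing T) (p q : List T.H × Bool) : Prop :=
  ¬ (T.IsIncompatPair R p q ∨ T.IsIncompatPair R q p)

/-- A trail: a route (`Bool` component `false`) or a band (`true`). -/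
def IsTrail (t : List T.H × Bool) : Prop :=
  if t.2 then T.IsBand t.1 else T.IsRoute t.1

noncomputable def indicT (t : List T.H × Bool) : T.H → ℝ := T.indic t.1

def RouteEquiv (l₁ l₂ : List T.H) : Prop := l₂ = l₁ ∨ l₂ = T.inv l₁

def BandEquiv (l₁ l₂ : List T.H) : Prop :=
  ∃ x y, l₁ = x ++ y ∧ (l₂ = y ++ x ∨ l₂ = T.inv (y ++ x))

def TrailEquiv (t₁ t₂ : List T.H × Bool) : Prop :=
  t₁.2 = t₂.2 ∧ (if t₁.2 then T.BandEquiv t₁.1 t₂.1 else T.RouteEquiv t₁.1 t₂.1)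

/-- A bundle: a set of pairwise compatible (hence self-compatible) trails, taken with
distinct representatives up to equivalence of trails. -/
def IsBundle (R : Framing T) (S : Finset (List T.H × Bool)) : Prop :=
  (∀ t ∈ S, T.IsTrail t) ∧
  (∀ t₁ ∈ S, ∀ t₂ ∈ S, T.Compatible R t₁ t₂) ∧
  (∀ t₁ ∈ S, ∀ t₂ ∈ S, T.TrailEquiv t₁ t₂ → t₁ = t₂)

/-- The bundle simplihedron `Δ₁(K̄)`: unit bundle combinations of the bundle. -/
def unitBundleSimplihedron (S : Finset (List T.H × Bool)) : Set (T.H → ℝ) :=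
  {F | ∃ a : List T.H × Bool → ℝ,
    (∀ t ∈ S, 0 ≤ a t) ∧
    F = ∑ t ∈ S, a t • T.indicT t ∧
    ∑ t ∈ S.filter (fun t => t.2 = false), a t = 1}

/-- Every nonnegative flow has at most one representation as a positive bundle
combination (up to equivalence of trails). -/
def UniquePositiveCombos (R : Framing T) : Prop :=
  ∀ (S₁ S₂ : Finset (List T.H × Bool)) (a₁ a₂ : List T.H × Bool → ℝ),
    T.IsBundle R S₁ → T.IsBundle R S₂ →
    (∀ t ∈ S₁, 0 < a₁ t) → (∀ t ∈ S₂, 0 < a₂ t) →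
    (∑ t ∈ S₁, a₁ t • T.indicT t) = (∑ t ∈ S₂, a₂ t • T.indicT t) →
    (∀ t₁ ∈ S₁, ∃ t₂ ∈ S₂, T.TrailEquiv t₁ t₂ ∧ a₁ t₁ = a₂ t₂) ∧
    (∀ t₂ ∈ S₂, ∃ t₁ ∈ S₁, T.TrailEquiv t₁ t₂ ∧ a₁ t₁ = a₂ t₂)

end TurbChart


/-!
In an acyclic chart no string repeats a half-edge: a repetition closes up a cyclic string,
whose primitive root is a band. So every string has length at most `|H|`. Conservation at
the head of an edge bounds the flow through it by the total flow through the edges that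
continue it as a string, and an edge ending at a fringe vertex carries at most twice the
strength. Pushing each edge forward along strings, which must reach the fringe within `|H|`
steps, bounds every coordinate of a unit flow by `2 |H| ^ |H|`.
-/

namespace TurbChart

variable {T : TurbChart}

theorem exists_isBand_of_isString_append_self {l : List T.H} (hne : l ≠ [])
    (hs : T.IsString (l ++ l)) : ∃ b, T.IsBand b := by
  induction hlen : l.length using Nat.strong_induction_on generalizing l with
  | _ n ih =>
  by_cases hpow : ∃ (c : List T.H) (k : ℕ), 2 ≤ k ∧ l = (List.replicate k c).flatten
  · obtain ⟨c, k, hk, rfl⟩ := hpow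
    obtain ⟨m, rfl⟩ : ∃ m, k = m + 2 := ⟨k - 2, by omega⟩
    have hc : c ≠ [] := by rintro rfl; simp at hne
    refine ih c.length ?_ hc ?_ rfl
    · have := List.length_pos_iff.mpr hc
      simp only [← hlen, List.length_flatten, List.map_replicate, List.sum_replicate,
        smul_eq_mul]
      nlinarith
    · refine hs.infix
        ⟨[], (List.replicate m c).flatten ++ (List.replicate (m + 2) c).flatten, ?_⟩
      simp [List.replicate_succ, List.append_assoc]
  · exact ⟨l, hne, hs, hpow⟩

theorem IsString.nodup (hA : T.Acyclic) {l : List T.H} (hs : T.IsString l) : l.Nodup := by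
  induction l with
  | nil => exact List.nodup_nil
  | cons x xs ih =>
    refine List.nodup_cons.mpr ⟨fun hx => hA ?_, ih hs.tail⟩
    obtain ⟨t, u, rfl⟩ := List.append_of_mem hx
    have hloop : T.IsString (x :: t ++ [x]) := hs.infix ⟨[], u, by simp⟩
    obtain ⟨hpath, -, hclose⟩ := List.isChain_append.mp hloop
    refine exists_isBand_of_isString_append_self (l := x :: t) (List.cons_ne_nil _ _) ?_
    exact hpath.append hpath fun a ha b hb => hclose a ha b (by simpa using hb)

theorem IsString.length_le_card (hA : T.Acyclic) {l : List T.H} (hs : T.IsString l) :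
    l.length ≤ Fintype.card T.H :=
  (hs.nodup hA).length_le_card

def successors (h : T.H) : Finset T.H :=
  univ.filter fun g => T.vert (T.op h) = T.vert g ∧ T.side (T.op h) ≠ T.side g

theorem IsString.append_successor {l : List T.H} {h g : T.H} (hs : T.IsString (l ++ [h]))
    (hg : g ∈ T.successors h) : T.IsString (l ++ [h] ++ [g]) :=
  hs.append (List.isChain_singleton g) fun a ha b hb => by
    simp only [List.getLast?_append, List.getLast?_singleton, Option.some_or,
      Option.mem_def, Option.some.injEq, List.head?_cons] at ha hb
    subst ha hb
    exact (mem_filter.mp hg).2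

theorem fringe_or_internal (v : T.V) : T.Fringe v ∨ T.Internal v := by
  obtain ⟨h, rfl⟩ := T.vert_cover v
  have : 0 < T.degree (T.vert h) := card_pos.mpr ⟨h, by simp⟩
  unfold Fringe Internal
  omega

theorem le_two_of_fringe {F : T.H → ℝ} (hnn : ∀ h, 0 ≤ F h) (hF : T.strength F = 1)
    {g : T.H} (hg : T.Fringe (T.vert g)) : F g ≤ 2 := by
  have hmem : g ∈ univ.filter fun g => T.Fringe (T.vert g) := by simpa using hg
  have := single_le_sum (fun i _ => hnn i) hmem
  unfold strength at hF
  linarith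

theorem IsFlow.le_sum_successors {F : T.H → ℝ} (hF : T.IsFlow F) (hnn : ∀ h, 0 ≤ F h)
    {h : T.H} (hint : T.Internal (T.vert (T.op h))) : F h ≤ ∑ g ∈ T.successors h, F g := by
  have hmem : T.op h ∈ univ.filter fun g =>
      T.vert g = T.vert (T.op h) ∧ T.side g = T.side (T.op h) := by simp
  have hle := single_le_sum (fun i _ => hnn i) hmem
  rw [hF.1 h] at hle
  have hcons := hF.2 _ hint
  have hsucc : T.successors h = univ.filter fun g =>
      T.vert g = T.vert (T.op h) ∧ T.side g = !T.side (T.op h) := by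
    ext g
    simp only [successors, mem_filter, mem_univ, true_and]
    cases T.side (T.op h) <;> cases T.side g <;> simp [eq_comm]
  rw [hsucc]
  cases hb : T.side (T.op h)
  · simpa [hb, hcons] using hle
  · simpa [hb, ← hcons] using hle

theorem unitFlows_apply_le_of_isString (hA : T.Acyclic) {F : T.H → ℝ} (hF : F ∈ T.unitFlows)
    (n : ℕ) {l : List T.H} {h : T.H} (hs : T.IsString (l ++ [h]))
    (hroom : Fintype.card T.H ≤ l.length + n) : F h ≤ 2 * Fintype.card T.H ^ n := by
  obtain ⟨hflow, hnn, hstr⟩ := hF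
  induction n generalizing l h with
  | zero =>
    have := hs.length_le_card hA
    simp only [List.length_append, List.length_singleton] at this
    omega
  | succ n ih =>
    have hcard : (1 : ℝ) ≤ Fintype.card T.H := by
      exact_mod_cast Fintype.card_pos_iff.mpr ⟨h⟩
    rcases fringe_or_internal (T.vert (T.op h)) with hfr | hint
    · calc F h = F (T.op h) := (hflow.1 h).symm
        _ ≤ 2 := le_two_of_fringe hnn hstr hfr
        _ ≤ 2 * Fintype.card T.H ^ (n + 1) := by
          have := one_le_pow₀ (n := n + 1) hcard
          linarith
    · calc F h ≤ ∑ g ∈ T.successors h, F g := hflow.le_sum_successors hnn hint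
        _ ≤ (T.successors h).card • (2 * Fintype.card T.H ^ n) :=
          sum_le_card_nsmul _ _ _ fun g hg => ih (hs.append_successor hg) (by
            simp only [List.length_append, List.length_singleton]; omega)
        _ ≤ Fintype.card T.H * (2 * Fintype.card T.H ^ n) := by
          rw [nsmul_eq_mul]
          gcongr
          exact_mod_cast card_le_univ _
        _ = 2 * Fintype.card T.H ^ (n + 1) := by ring

end TurbChart

/-- The turbulence polyhedron of an acyclic turbulence chart (one with
no bands) is bounded. -/
theorem unitFlows_bounded_of_acyclic (T : TurbChart) (h : T.Acyclic) :
    Bornology.IsBounded T.unitFlows := by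
  refine isBounded_iff_forall_norm_le.mpr ⟨2 * Fintype.card T.H ^ Fintype.card T.H, ?_⟩
  intro F hF
  refine (pi_norm_le_iff_of_nonneg (by positivity)).mpr fun e => ?_
  rw [Real.norm_eq_abs, abs_of_nonneg (hF.2.1 e)]
  exact T.unitFlows_apply_le_of_isString h hF _ (l := []) (List.isChain_singleton e) (by simp)
end

section
/- Let (G,∼,R) be a gentle framed turbulence chart. Then every connected component of G contains at least one fringe edge. -/
open Finset

namespace TurbChart

variable (T : TurbChart)

/-- A half-edge is lonely if it is at a fringe vertex or alone in its class. -/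
def Lonely (h : T.H) : Prop :=
  T.Fringe (T.vert h) ∨ ∀ g, g ≠ h → T.vert g = T.vert h → T.side g ≠ T.side h

/-- A half-edge is high if some other half-edge of its class lies below it. -/
def High (R : Framing T) (h : T.H) : Prop := ∃ g, R.lt g h

/-- A half-edge is low if some other half-edge of its class lies above it. -/
def Low (R : Framing T) (h : T.H) : Prop := ∃ g, R.lt h g

/-- An oriented edge (tail half-edge `h`, head half-edge `op h`) is ascending if its
tail is low or lonely and its head is high or lonely. -/
def Ascending (R : Framing T) (h : T.H) : Prop :=
  (T.Low R h ∨ T.Lonely h) ∧ (T.High R (T.op h) ∨ T.Lonely (T.op h))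

def Descending (R : Framing T) (h : T.H) : Prop :=
  (T.High R h ∨ T.Lonely h) ∧ (T.Low R (T.op h) ∨ T.Lonely (T.op h))

/-- Fullness: each class at each internal vertex has exactly two half-edges. -/
def Full : Prop := ∀ v, T.Internal v → ∀ b : Bool,
  (Finset.univ.filter fun h => T.vert h = v ∧ T.side h = b).card = 2

/-- A gentle framed turbulence chart. -/
def Gentle (R : Framing T) : Prop :=
  T.Full ∧
  (∀ h, T.Internal (T.vert h) ∨ T.Internal (T.vert (T.op h))) ∧
  (∀ h, T.Ascending R h ∨ T.Descending R h) ∧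
  (∀ l, T.IsBand l →
    ¬ (∀ h ∈ l, T.Ascending R h) ∧ ¬ (∀ h ∈ l, T.Descending R h))

/-- Adjacency of vertices in the underlying undirected graph. -/
def Adj (u w : T.V) : Prop := ∃ h, T.vert h = u ∧ T.vert (T.op h) = w

end TurbChart

/-!
In a full gentle chart the lower half-edge of a class at an internal vertex is neither high
nor lonely, so its edge cannot be descending and, being steep, is ascending. In a component
without fringe edges every vertex is internal, so a walk along ascending edges can always be
continued through the other class at its head. By finiteness the walk closes up, and the
primitive root of the resulting cyclic string is a band of ascending edges, which gentleness
forbids.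
-/

theorem List.isChain_iterate {α : Type*} {r : α → α → Prop} {f : α → α}
    (h : ∀ a, r a (f a)) : ∀ (a : α) (n : ℕ), (List.iterate f a n).IsChain r
  | _, 0 => .nil
  | _, 1 => .singleton _
  | a, n + 2 => .cons_cons (h a) (isChain_iterate h (f a) (n + 1))

namespace TurbChart

variable {T : TurbChart}

lemma internal_of_not_fringe {h : T.H} (hh : ¬ T.Fringe (T.vert h)) :
    T.Internal (T.vert h) := by
  have hpos : 0 < T.degree (T.vert h) := Finset.card_pos.2 ⟨h, by simp⟩
  unfold Fringe at hh
  unfold Internal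
  omega

lemma Gentle.ascending_of_lt {R : Framing T} (hg : T.Gentle R) {a c : T.H}
    (ha : T.Internal (T.vert a)) (hac : R.lt a c) : T.Ascending R a := by
  obtain ⟨hvac, hsac⟩ := R.lt_compat a c hac
  have hne : a ≠ c := fun h => R.lt_irrefl a (h ▸ hac)
  have hclass : {a, c} = univ.filter fun x => T.vert x = T.vert a ∧ T.side x = T.side a := by
    refine Finset.eq_of_subset_of_card_le ?_ (by rw [card_pair hne, hg.1 _ ha])
    simp [Finset.insert_subset_iff, hvac, hsac]
  have hmem : ∀ x, T.vert x = T.vert a → T.side x = T.side a → x = a ∨ x = c := by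
    intro x hv hs
    simpa using (hclass ▸ Finset.mem_filter.2 ⟨mem_univ x, hv, hs⟩ : x ∈ ({a, c} : Finset T.H))
  refine (hg.2.2.1 a).resolve_right fun hdesc => ?_
  rcases hdesc.1 with ⟨x, hxa⟩ | hfringe | halone
  · obtain ⟨hv, hs⟩ := R.lt_compat x a hxa
    rcases hmem x hv hs with rfl | rfl
    · exact R.lt_irrefl x hxa
    · exact R.lt_irrefl x (R.lt_trans _ _ _ hxa hac)
  · unfold Fringe at hfringe
    unfold Internal at ha
    omega
  · exact halone c hne.symm hvac.symm hsac.symm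

lemma Gentle.exists_ascending {R : Framing T} (hg : T.Gentle R) {v : T.V}
    (hv : T.Internal v) (b : Bool) : ∃ g, T.vert g = v ∧ T.side g = b ∧ T.Ascending R g := by
  obtain ⟨g₁, g₂, hne, hclass⟩ := Finset.card_eq_two.1 (hg.1 v hv b)
  have hg₁ : T.vert g₁ = v ∧ T.side g₁ = b := by
    simpa using (hclass ▸ mem_insert_self g₁ {g₂} : g₁ ∈ univ.filter _)
  have hg₂ : T.vert g₂ = v ∧ T.side g₂ = b := by
    simpa using (hclass ▸ mem_insert_of_mem (mem_singleton_self g₂) : g₂ ∈ univ.filter _)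
  rcases R.lt_total g₁ g₂ hne (hg₁.1.trans hg₂.1.symm) (hg₁.2.trans hg₂.2.symm) with h | h
  · exact ⟨g₁, hg₁.1, hg₁.2, hg.ascending_of_lt (hg₁.1 ▸ hv) h⟩
  · exact ⟨g₂, hg₂.1, hg₂.2, hg.ascending_of_lt (hg₂.1 ▸ hv) h⟩

lemma exists_band_of_isString_append_self {P : T.H → Prop} {l : List T.H} (hne : l ≠ [])
    (hstr : T.IsString (l ++ l)) (hP : ∀ x ∈ l, P x) : ∃ b, T.IsBand b ∧ ∀ x ∈ b, P x := by
  induction hlen : l.length using Nat.strong_induction_on generalizing l with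
  | _ n ih =>
  by_cases hpow : ∃ (c : List T.H) (k : ℕ), 2 ≤ k ∧ l = (List.replicate k c).flatten
  · obtain ⟨c, k, hk, rfl⟩ := hpow
    obtain ⟨k, rfl⟩ : ∃ k', k = k' + 2 := ⟨k - 2, by omega⟩
    have hsplit : (List.replicate (k + 2) c).flatten = c ++ c ++ (List.replicate k c).flatten := by
      simp [List.replicate_succ]
    have hc : c ≠ [] := by
      rintro rfl
      simp at hne
    rw [hsplit] at hstr hP hlen
    refine ih c.length ?_ hc (hstr.infix ?_) (fun x hx => hP x (by simp [hx])) rfl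
    · have := List.length_pos_iff.2 hc
      simp only [List.length_append] at hlen
      omega
    · exact ((List.prefix_append _ _).trans (List.prefix_append _ _)).isInfix
  · exact ⟨l, ⟨hne, hstr, hpow⟩, hP⟩

lemma exists_isString_append_self {P : T.H → Prop} (hstart : ∃ g, P g)
    (hnext : ∀ g, P g → ∃ g', P g' ∧ T.vert (T.op g) = T.vert g' ∧ T.side (T.op g) ≠ T.side g') :
    ∃ l, l ≠ [] ∧ T.IsString (l ++ l) ∧ ∀ x ∈ l, P x := by
  choose nxt hnxt using fun g : {g // P g} => hnext g.1 g.2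
  let f : {g // P g} → {g // P g} := fun g => ⟨nxt g, (hnxt g).1⟩
  obtain ⟨g₀, hg₀⟩ := hstart
  obtain ⟨i, j, hij, hfij⟩ := Set.finite_univ.exists_lt_map_eq_of_forall_mem
    (f := fun n => f^[n] ⟨g₀, hg₀⟩) (fun _ => Set.mem_univ _)
  set y := f^[i] ⟨g₀, hg₀⟩
  have hper : f^[j - i] y = y := by
    rw [← Function.iterate_add_apply, Nat.sub_add_cancel hij.le]
    exact hfij.symm
  have hcyc : List.iterate f y (j - i) ++ List.iterate f y (j - i) =
      List.iterate f y (j - i + (j - i)) := by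
    rw [List.iterate_add, hper]
  refine ⟨(List.iterate f y (j - i)).map Subtype.val,
    List.map_eq_nil_iff.not.2 (List.iterate_eq_nil.not.2 (by omega)), ?_, ?_⟩
  · rw [IsString, ← List.map_append, hcyc]
    exact (List.isChain_map _).2 (List.isChain_iterate (fun g => (hnxt g).2) _ _)
  · intro x hx
    obtain ⟨g, -, rfl⟩ := List.mem_map.1 hx
    exact g.2

end TurbChart

/-- Every connected component of a gentle framed turbulence chart
contains at least one fringe edge. -/
theorem gentle_component_has_fringe_edge (T : TurbChart) (R : Framing T)
    (hg : T.Gentle R) :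
    ∀ v : T.V, ∃ h : T.H, Relation.ReflTransGen T.Adj v (T.vert h) ∧
      (T.Fringe (T.vert h) ∨ T.Fringe (T.vert (T.op h))) := by
  intro v
  by_contra! hcon
  let P : T.H → Prop := fun g => T.Ascending R g ∧ Relation.ReflTransGen T.Adj v (T.vert g)
  have hstart : ∃ g, P g := by
    obtain ⟨h₀, rfl⟩ := T.vert_cover v
    obtain ⟨g, hgv, -, hasc⟩ :=
      hg.exists_ascending (TurbChart.internal_of_not_fringe (hcon h₀ .refl).1) true
    exact ⟨g, hasc, hgv ▸ .refl⟩
  have hnext : ∀ g, P g →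
      ∃ g', P g' ∧ T.vert (T.op g) = T.vert g' ∧ T.side (T.op g) ≠ T.side g' := by
    rintro g ⟨-, hreach⟩
    obtain ⟨g', hv', hs', hasc⟩ :=
      hg.exists_ascending (TurbChart.internal_of_not_fringe (hcon g hreach).2) (!T.side (T.op g))
    exact ⟨g', ⟨hasc, hv' ▸ hreach.tail ⟨g, rfl, rfl⟩⟩, hv'.symm, by simp [hs']⟩
  obtain ⟨l, hne, hstr, hP⟩ := TurbChart.exists_isString_append_self hstart hnext
  obtain ⟨b, hband, hasc⟩ :=
    TurbChart.exists_band_of_isString_append_self hne hstr fun x hx => (hP x hx).1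
  exact (hg.2.2.2 b hband).1 hasc
end

section
/- Let (G,∼,R) be a framed turbulence chart, let α be an idle edge (an edge between two distinct vertices having a lonely half-edge at an internal vertex), and let (G',∼',R') be the contraction of (G,∼,R) at α. Then the linear projection ℝ^E → ℝ^{E∖{α}} forgetting the α-coordinate restricts to a bijection from F₁(G,∼) onto F₁(G',∼') that maps lattice points to lattice points bijectively (a unimodular equivalence). -/
open Finset

/-- `(T',∼',R')` is the contraction of `(T,∼,R)` at the idle edge whose lonely
half-edge is `h₀` (at internal vertex `v₁ = vert h₀`, the other endpoint being the
internal vertex `v₂ = vert (op h₀) ≠ v₁`). `ι` includes the surviving half-edges of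
`T'` into `T` and `f` is the vertex identification map. -/
structure IsContraction (T T' : TurbChart) (R : Framing T) (R' : Framing T')
    (h₀ : T.H) (ι : T'.H → T.H) (f : T.V → T'.V) : Prop where
  v_ne : T.vert h₀ ≠ T.vert (T.op h₀)
  v₁_internal : T.Internal (T.vert h₀)
  v₂_internal : T.Internal (T.vert (T.op h₀))
  lonely : ∀ h, h ≠ h₀ → T.vert h = T.vert h₀ → T.side h ≠ T.side h₀
  inj_ι : Function.Injective ι
  range_ι : Set.range ι = {h | h ≠ h₀ ∧ h ≠ T.op h₀}
  op_ι : ∀ h, T.op (ι h) = ι (T'.op h)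
  surj_f : Function.Surjective f
  glue : f (T.vert h₀) = f (T.vert (T.op h₀))
  f_almost_inj : ∀ u w, f u = f w → u = w ∨
    (u = T.vert h₀ ∧ w = T.vert (T.op h₀)) ∨
    (u = T.vert (T.op h₀) ∧ w = T.vert h₀)
  vert_ι : ∀ h, T'.vert h = f (T.vert (ι h))
  side_same : ∀ a b, T.vert (ι a) = T.vert (ι b) →
    (T'.side a = T'.side b ↔ T.side (ι a) = T.side (ι b))
  side_merge : ∀ a b, T.vert (ι a) = T.vert h₀ → T.vert (ι b) = T.vert (T.op h₀) →
    (T'.side a = T'.side b ↔ T.side (ι b) = T.side (T.op h₀))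
  lt_ι : ∀ a b, T.vert (ι a) = T.vert (ι b) → (R'.lt a b ↔ R.lt (ι a) (ι b))
  fringe_ι : ∀ h, T.Fringe (T.vert (ι h)) ↔ T'.Fringe (T'.vert h)


section ContractionAux

lemma bool_eq_not_iff' {x b : Bool} : x = !b ↔ x ≠ b := by
  cases x <;> cases b <;> simp

lemma bool_flip_iff {x y β c : Bool} (h : (x = β) ↔ (y = c)) : (x = !β) ↔ (y = !c) := by
  cases x <;> cases y <;> cases β <;> cases c <;> simp_all

lemma cons_b (S : TurbChart) (v : S.V) (F : S.H → ℝ)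
    (h : ∑ h ∈ Finset.univ.filter (fun h => S.vert h = v ∧ S.side h = true), F h =
         ∑ h ∈ Finset.univ.filter (fun h => S.vert h = v ∧ S.side h = false), F h)
    (b : Bool) :
    ∑ h ∈ Finset.univ.filter (fun h => S.vert h = v ∧ S.side h = b), F h =
    ∑ h ∈ Finset.univ.filter (fun h => S.vert h = v ∧ S.side h = !b), F h := by
  cases b
  · simpa using h.symm
  · simpa using h

lemma cons_iff (S : TurbChart) (v : S.V) (F : S.H → ℝ) (b : Bool)
    (h : ∑ h ∈ Finset.univ.filter (fun h => S.vert h = v ∧ S.side h = b), F h =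
         ∑ h ∈ Finset.univ.filter (fun h => S.vert h = v ∧ S.side h = !b), F h) :
    ∑ h ∈ Finset.univ.filter (fun h => S.vert h = v ∧ S.side h = true), F h =
    ∑ h ∈ Finset.univ.filter (fun h => S.vert h = v ∧ S.side h = false), F h := by
  cases b
  · simpa using h.symm
  · simpa using h

lemma internal_not_fringe (S : TurbChart) {v : S.V} (h : S.Internal v) : ¬ S.Fringe v := by
  intro h1
  rw [TurbChart.Fringe] at h1
  rw [TurbChart.Internal, h1] at h
  omega

namespace IsContraction

variable {T T' : TurbChart} {R : Framing T} {R' : Framing T'}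
  {h₀ : T.H} {ι : T'.H → T.H} {f : T.V → T'.V}

lemma ι_ne_h₀ (hc : IsContraction T T' R R' h₀ ι f) (h' : T'.H) :
    ι h' ≠ h₀ ∧ ι h' ≠ T.op h₀ := by
  have : ι h' ∈ Set.range ι := ⟨h', rfl⟩
  rwa [hc.range_ι] at this

lemma mem_range' (hc : IsContraction T T' R R' h₀ ι f) {h : T.H}
    (h1 : h ≠ h₀) (h2 : h ≠ T.op h₀) : ∃ h', ι h' = h := by
  have : h ∈ Set.range ι := by rw [hc.range_ι]; exact ⟨h1, h2⟩
  exact this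

lemma filt_image (hc : IsContraction T T' R R' h₀ ι f) (P : T.H → Prop) [DecidablePred P]
    (hP : ∀ h, P h → h ≠ h₀ ∧ h ≠ T.op h₀) :
    Finset.univ.filter P = Finset.image ι (Finset.univ.filter fun h' => P (ι h')) := by
  ext h
  simp only [Finset.mem_filter, Finset.mem_univ, true_and, Finset.mem_image]
  constructor
  · intro hp
    obtain ⟨h', rfl⟩ := hc.mem_range' (hP h hp).1 (hP h hp).2
    exact ⟨h', hp, rfl⟩
  · rintro ⟨h', hp, rfl⟩
    exact hp

lemma sum_filt (hc : IsContraction T T' R R' h₀ ι f) (P : T.H → Prop) [DecidablePred P]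
    (hP : ∀ h, P h → h ≠ h₀ ∧ h ≠ T.op h₀) (F : T.H → ℝ) :
    ∑ h ∈ Finset.univ.filter P, F h
      = ∑ h' ∈ Finset.univ.filter (fun h' => P (ι h')), F (ι h') := by
  rw [hc.filt_image P hP, Finset.sum_image (fun a _ b _ hab => hc.inj_ι hab)]

lemma sum_filt' (hc : IsContraction T T' R R' h₀ ι f) (P : T.H → Prop) [DecidablePred P]
    (hP : ∀ h, P h → h ≠ h₀ ∧ h ≠ T.op h₀) {F : T.H → ℝ} {F' : T'.H → ℝ}
    (hag : ∀ h', F (ι h') = F' h') :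
    ∑ h ∈ Finset.univ.filter P, F h
      = ∑ h' ∈ Finset.univ.filter (fun h' => P (ι h')), F' h' := by
  rw [hc.sum_filt P hP F]
  exact Finset.sum_congr rfl fun h' _ => hag h'

lemma class_h₀ (hc : IsContraction T T' R R' h₀ ι f) :
    Finset.univ.filter (fun h => T.vert h = T.vert h₀ ∧ T.side h = T.side h₀) = {h₀} := by
  ext h
  simp only [Finset.mem_filter, Finset.mem_univ, true_and, Finset.mem_singleton]
  constructor
  · rintro ⟨hv, hs⟩
    by_contra hne
    exact hc.lonely h hne hv hs
  · rintro rfl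
    exact ⟨rfl, rfl⟩

lemma flow_h₀ (hc : IsContraction T T' R R' h₀ ι f) {F : T.H → ℝ} (hF : T.IsFlow F) :
    F h₀ = ∑ h ∈ Finset.univ.filter
      (fun h => T.vert h = T.vert h₀ ∧ T.side h = !(T.side h₀)), F h := by
  have h1 := cons_b T (T.vert h₀) F (hF.2 _ hc.v₁_internal) (T.side h₀)
  rw [hc.class_h₀, Finset.sum_singleton] at h1
  exact h1

lemma vert_transfer (hc : IsContraction T T' R R' h₀ ι f) {v : T.V}
    (hv1 : v ≠ T.vert h₀) (hv2 : v ≠ T.vert (T.op h₀)) (h' : T'.H) :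
    T'.vert h' = f v ↔ T.vert (ι h') = v := by
  rw [hc.vert_ι]
  constructor
  · intro h
    rcases hc.f_almost_inj _ _ h with h | ⟨_, h2⟩ | ⟨_, h2⟩
    · exact h
    · exact absurd h2 hv2
    · exact absurd h2 hv1
  · intro h
    rw [h]

lemma vert_merge (hc : IsContraction T T' R R' h₀ ι f) (h' : T'.H) :
    T'.vert h' = f (T.vert h₀) ↔
      T.vert (ι h') = T.vert h₀ ∨ T.vert (ι h') = T.vert (T.op h₀) := by
  rw [hc.vert_ι]
  constructor
  · intro h
    rcases hc.f_almost_inj _ _ h with h | ⟨h1, _⟩ | ⟨h1, _⟩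
    · exact Or.inl h
    · exact Or.inl h1
    · exact Or.inr h1
  · rintro (h | h)
    · rw [h]
    · rw [h]
      exact hc.glue.symm

lemma side_at_v₁ (hc : IsContraction T T' R R' h₀ ι f) {h' : T'.H}
    (hv : T.vert (ι h') = T.vert h₀) : T.side (ι h') = !(T.side h₀) := by
  rw [bool_eq_not_iff']
  exact hc.lonely _ (hc.ι_ne_h₀ h').1 hv

lemma exists_a₀ (hc : IsContraction T T' R R' h₀ ι f) :
    ∃ a' : T'.H, T.vert (ι a') = T.vert h₀ := by
  obtain ⟨a, hva, hsa⟩ := T.sides_nonempty (T.vert h₀) hc.v₁_internal (!(T.side h₀))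
  have h1 : a ≠ h₀ := by
    rintro rfl
    simp at hsa
  have h2 : a ≠ T.op h₀ := by
    rintro rfl
    exact hc.v_ne hva.symm
  obtain ⟨a', rfl⟩ := hc.mem_range' h1 h2
  exact ⟨a', hva⟩

lemma exists_b₀ (hc : IsContraction T T' R R' h₀ ι f) :
    ∃ b' : T'.H, T.vert (ι b') = T.vert (T.op h₀) := by
  obtain ⟨b, hvb, hsb⟩ := T.sides_nonempty (T.vert (T.op h₀)) hc.v₂_internal
    (!(T.side (T.op h₀)))
  have h2 : b ≠ T.op h₀ := by
    rintro rfl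
    simp at hsb
  have h1 : b ≠ h₀ := by
    rintro rfl
    exact hc.v_ne hvb
  obtain ⟨b', rfl⟩ := hc.mem_range' h1 h2
  exact ⟨b', hvb⟩

lemma merge_class_mem (hc : IsContraction T T' R R' h₀ ι f) {a₀' : T'.H}
    (hva : T.vert (ι a₀') = T.vert h₀) (h' : T'.H) :
    (T'.vert h' = f (T.vert h₀) ∧ T'.side h' = T'.side a₀') ↔
    (T.vert (ι h') = T.vert h₀ ∨
      (T.vert (ι h') = T.vert (T.op h₀) ∧ T.side (ι h') = T.side (T.op h₀))) := by
  constructor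
  · rintro ⟨hv, hs⟩
    rcases (hc.vert_merge h').mp hv with h1 | h1
    · exact Or.inl h1
    · exact Or.inr ⟨h1, (hc.side_merge a₀' h' hva h1).mp hs.symm⟩
  · rintro (h1 | ⟨h1, h2⟩)
    · refine ⟨(hc.vert_merge h').mpr (Or.inl h1), ?_⟩
      rw [hc.side_same h' a₀' (h1.trans hva.symm), hc.side_at_v₁ h1, hc.side_at_v₁ hva]
    · exact ⟨(hc.vert_merge h').mpr (Or.inr h1),
        ((hc.side_merge a₀' h' hva h1).mpr h2).symm⟩

lemma merge_class_mem_not (hc : IsContraction T T' R R' h₀ ι f) {a₀' : T'.H}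
    (hva : T.vert (ι a₀') = T.vert h₀) (h' : T'.H) :
    (T'.vert h' = f (T.vert h₀) ∧ T'.side h' = !(T'.side a₀')) ↔
    (T.vert (ι h') = T.vert (T.op h₀) ∧ T.side (ι h') = !(T.side (T.op h₀))) := by
  constructor
  · rintro ⟨hv, hs⟩
    rw [bool_eq_not_iff'] at hs
    rcases (hc.vert_merge h').mp hv with h1 | h1
    · exfalso
      apply hs
      rw [hc.side_same h' a₀' (h1.trans hva.symm), hc.side_at_v₁ h1, hc.side_at_v₁ hva]
    · refine ⟨h1, ?_⟩
      rw [bool_eq_not_iff']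
      intro hs2
      exact hs ((hc.side_merge a₀' h' hva h1).mpr hs2).symm
  · rintro ⟨h1, h2⟩
    refine ⟨(hc.vert_merge h').mpr (Or.inr h1), ?_⟩
    rw [bool_eq_not_iff']
    intro hs
    have h3 := (hc.side_merge a₀' h' hva h1).mp hs.symm
    rw [bool_eq_not_iff'] at h2
    exact h2 h3

lemma sumMa (hc : IsContraction T T' R R' h₀ ι f) {a₀' : T'.H}
    (hva : T.vert (ι a₀') = T.vert h₀) (F : T.H → ℝ) :
    ∑ h' ∈ Finset.univ.filter
        (fun h' => T'.vert h' = f (T.vert h₀) ∧ T'.side h' = T'.side a₀'), F (ι h')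
    = (∑ h ∈ Finset.univ.filter
        (fun h => T.vert h = T.vert h₀ ∧ T.side h = !(T.side h₀)), F h)
      + (∑ h ∈ Finset.univ.filter
        (fun h => T.vert h = T.vert (T.op h₀) ∧ T.side h = T.side (T.op h₀)), F h)
      - F (T.op h₀) := by
  classical
  set P : T.H → Prop := fun h =>
    (T.vert h = T.vert h₀ ∧ T.side h = !(T.side h₀)) ∨
    (T.vert h = T.vert (T.op h₀) ∧ T.side h = T.side (T.op h₀) ∧ h ≠ T.op h₀) with hPdef
  have hPne : ∀ h, P h → h ≠ h₀ ∧ h ≠ T.op h₀ := by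
    rintro h (⟨hv, hs⟩ | ⟨hv, hs, hne⟩)
    · constructor
      · rintro rfl
        simp at hs
      · rintro rfl
        exact hc.v_ne hv.symm
    · refine ⟨?_, hne⟩
      rintro rfl
      exact hc.v_ne hv
  have e1 : Finset.univ.filter
      (fun h' => T'.vert h' = f (T.vert h₀) ∧ T'.side h' = T'.side a₀')
      = Finset.univ.filter (fun h' => P (ι h')) := by
    ext h'
    simp only [Finset.mem_filter, Finset.mem_univ, true_and]
    rw [hc.merge_class_mem hva h', hPdef]
    constructor
    · rintro (h1 | ⟨h1, h2⟩)
      · exact Or.inl ⟨h1, hc.side_at_v₁ h1⟩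
      · exact Or.inr ⟨h1, h2, (hc.ι_ne_h₀ h').2⟩
    · rintro (⟨h1, _⟩ | ⟨h1, h2, _⟩)
      · exact Or.inl h1
      · exact Or.inr ⟨h1, h2⟩
  rw [e1, ← hc.sum_filt P hPne F]
  have e2 : Finset.univ.filter P =
      (Finset.univ.filter fun h => T.vert h = T.vert h₀ ∧ T.side h = !(T.side h₀)) ∪
      ((Finset.univ.filter fun h =>
        T.vert h = T.vert (T.op h₀) ∧ T.side h = T.side (T.op h₀)).erase (T.op h₀)) := by
    ext h
    simp only [hPdef, Finset.mem_filter, Finset.mem_univ, true_and, Finset.mem_union,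
      Finset.mem_erase]
    tauto
  have hdisj : Disjoint
      (Finset.univ.filter fun h => T.vert h = T.vert h₀ ∧ T.side h = !(T.side h₀))
      ((Finset.univ.filter fun h =>
        T.vert h = T.vert (T.op h₀) ∧ T.side h = T.side (T.op h₀)).erase (T.op h₀)) := by
    rw [Finset.disjoint_left]
    intro h hh1 hh2
    simp only [Finset.mem_filter, Finset.mem_univ, true_and, Finset.mem_erase] at hh1 hh2
    exact hc.v_ne (hh1.1 ▸ hh2.2.1)
  rw [e2, Finset.sum_union hdisj, Finset.sum_erase_eq_sub (by simp)]
  ring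

lemma sumMb (hc : IsContraction T T' R R' h₀ ι f) {a₀' : T'.H}
    (hva : T.vert (ι a₀') = T.vert h₀) (F : T.H → ℝ) :
    ∑ h' ∈ Finset.univ.filter
        (fun h' => T'.vert h' = f (T.vert h₀) ∧ T'.side h' = !(T'.side a₀')), F (ι h')
    = ∑ h ∈ Finset.univ.filter
        (fun h => T.vert h = T.vert (T.op h₀) ∧ T.side h = !(T.side (T.op h₀))), F h := by
  classical
  set P : T.H → Prop := fun h =>
    T.vert h = T.vert (T.op h₀) ∧ T.side h = !(T.side (T.op h₀)) with hPdef
  have hPne : ∀ h, P h → h ≠ h₀ ∧ h ≠ T.op h₀ := by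
    rintro h ⟨hv, hs⟩
    constructor
    · rintro rfl
      exact hc.v_ne hv
    · rintro rfl
      simp at hs
  have e1 : Finset.univ.filter
      (fun h' => T'.vert h' = f (T.vert h₀) ∧ T'.side h' = !(T'.side a₀'))
      = Finset.univ.filter (fun h' => P (ι h')) := by
    ext h'
    simp only [Finset.mem_filter, Finset.mem_univ, true_and]
    exact hc.merge_class_mem_not hva h'
  rw [e1, ← hc.sum_filt P hPne F]

lemma sumR1 (hc : IsContraction T T' R R' h₀ ι f) {v : T.V}
    (hv1 : v ≠ T.vert h₀) (hv2 : v ≠ T.vert (T.op h₀)) {h₁' : T'.H}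
    (hv : T.vert (ι h₁') = v) (F : T.H → ℝ) :
    ∑ h' ∈ Finset.univ.filter
        (fun h' => T'.vert h' = f v ∧ T'.side h' = T'.side h₁'), F (ι h')
    = ∑ h ∈ Finset.univ.filter
        (fun h => T.vert h = v ∧ T.side h = T.side (ι h₁')), F h := by
  classical
  set P : T.H → Prop := fun h => T.vert h = v ∧ T.side h = T.side (ι h₁') with hPdef
  have hPne : ∀ h, P h → h ≠ h₀ ∧ h ≠ T.op h₀ := by
    rintro h ⟨hvv, _⟩
    constructor
    · rintro rfl
      exact hv1 hvv.symm
    · rintro rfl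
      exact hv2 hvv.symm
  have e1 : Finset.univ.filter
      (fun h' => T'.vert h' = f v ∧ T'.side h' = T'.side h₁')
      = Finset.univ.filter (fun h' => P (ι h')) := by
    ext h'
    simp only [Finset.mem_filter, Finset.mem_univ, true_and]
    constructor
    · rintro ⟨hvv, hss⟩
      have h1 := (hc.vert_transfer hv1 hv2 h').mp hvv
      exact ⟨h1, (hc.side_same h' h₁' (h1.trans hv.symm)).mp hss⟩
    · rintro ⟨h1, h2⟩
      exact ⟨(hc.vert_transfer hv1 hv2 h').mpr h1,
        (hc.side_same h' h₁' (h1.trans hv.symm)).mpr h2⟩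
  rw [e1, ← hc.sum_filt P hPne F]

lemma sumR2 (hc : IsContraction T T' R R' h₀ ι f) {v : T.V}
    (hv1 : v ≠ T.vert h₀) (hv2 : v ≠ T.vert (T.op h₀)) {h₁' : T'.H}
    (hv : T.vert (ι h₁') = v) (F : T.H → ℝ) :
    ∑ h' ∈ Finset.univ.filter
        (fun h' => T'.vert h' = f v ∧ T'.side h' = !(T'.side h₁')), F (ι h')
    = ∑ h ∈ Finset.univ.filter
        (fun h => T.vert h = v ∧ T.side h = !(T.side (ι h₁'))), F h := by
  classical
  set P : T.H → Prop := fun h => T.vert h = v ∧ T.side h = !(T.side (ι h₁')) with hPdef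
  have hPne : ∀ h, P h → h ≠ h₀ ∧ h ≠ T.op h₀ := by
    rintro h ⟨hvv, _⟩
    constructor
    · rintro rfl
      exact hv1 hvv.symm
    · rintro rfl
      exact hv2 hvv.symm
  have e1 : Finset.univ.filter
      (fun h' => T'.vert h' = f v ∧ T'.side h' = !(T'.side h₁'))
      = Finset.univ.filter (fun h' => P (ι h')) := by
    ext h'
    simp only [Finset.mem_filter, Finset.mem_univ, true_and]
    constructor
    · rintro ⟨hvv, hss⟩
      have h1 := (hc.vert_transfer hv1 hv2 h').mp hvv
      exact ⟨h1, (bool_flip_iff (hc.side_same h' h₁' (h1.trans hv.symm))).mp hss⟩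
    · rintro ⟨h1, h2⟩
      exact ⟨(hc.vert_transfer hv1 hv2 h').mpr h1,
        (bool_flip_iff (hc.side_same h' h₁' (h1.trans hv.symm))).mpr h2⟩
  rw [e1, ← hc.sum_filt P hPne F]

lemma deg_eq (hc : IsContraction T T' R R' h₀ ι f) {v : T.V}
    (hv1 : v ≠ T.vert h₀) (hv2 : v ≠ T.vert (T.op h₀)) :
    T'.degree (f v) = T.degree v := by
  classical
  unfold TurbChart.degree
  have e1 : (Finset.univ.filter fun h' => T'.vert h' = f v)
      = Finset.univ.filter (fun h' => T.vert (ι h') = v) := by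
    ext h'
    simp only [Finset.mem_filter, Finset.mem_univ, true_and]
    exact hc.vert_transfer hv1 hv2 h'
  have e2 : Finset.univ.filter (fun h : T.H => T.vert h = v)
      = Finset.image ι (Finset.univ.filter fun h' => T.vert (ι h') = v) :=
    hc.filt_image _ (fun h hh => ⟨by rintro rfl; exact hv1 hh.symm,
      by rintro rfl; exact hv2 hh.symm⟩)
  rw [e1, e2, Finset.card_image_of_injective _ hc.inj_ι]

lemma w_internal (hc : IsContraction T T' R R' h₀ ι f) :
    T'.Internal (f (T.vert h₀)) := by
  obtain ⟨a', hva⟩ := hc.exists_a₀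
  obtain ⟨b', hvb⟩ := hc.exists_b₀
  have ha : T'.vert a' = f (T.vert h₀) := by rw [hc.vert_ι, hva]
  have hb : T'.vert b' = f (T.vert h₀) := by rw [hc.vert_ι, hvb]; exact hc.glue.symm
  have hne : a' ≠ b' := by
    intro e
    apply hc.v_ne
    rw [← hva, e, hvb]
  show 2 ≤ T'.degree _
  rw [TurbChart.degree]
  have ha' : a' ∈ Finset.univ.filter (fun h => T'.vert h = f (T.vert h₀)) :=
    Finset.mem_filter.mpr ⟨Finset.mem_univ _, ha⟩
  have hb' : b' ∈ Finset.univ.filter (fun h => T'.vert h = f (T.vert h₀)) :=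
    Finset.mem_filter.mpr ⟨Finset.mem_univ _, hb⟩
  have h2 := Finset.one_lt_card.mpr ⟨a', ha', b', hb', hne⟩
  omega

lemma strength_eq (hc : IsContraction T T' R R' h₀ ι f) {F : T.H → ℝ} {F' : T'.H → ℝ}
    (hag : ∀ h', F (ι h') = F' h') : T.strength F = T'.strength F' := by
  unfold TurbChart.strength
  congr 1
  have e1 : Finset.univ.filter (fun h' => T'.Fringe (T'.vert h'))
      = Finset.univ.filter (fun h' => T.Fringe (T.vert (ι h'))) := by
    ext h'
    simp only [Finset.mem_filter, Finset.mem_univ, true_and]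
    exact (hc.fringe_ι h').symm
  rw [e1]
  exact hc.sum_filt' (fun h => T.Fringe (T.vert h))
    (fun h hh => ⟨by rintro rfl; exact internal_not_fringe T hc.v₁_internal hh,
      by rintro rfl; exact internal_not_fringe T hc.v₂_internal hh⟩) hag

end IsContraction

end ContractionAux

/-- Contracting a framed turbulence chart at an idle edge induces,
via forgetting the coordinate of the contracted edge, a bijection between the
turbulence polyhedra which maps lattice points to lattice points bijectively
(a unimodular equivalence). -/
theorem contraction_unimodular_equiv (T T' : TurbChart)
    (R : Framing T) (R' : Framing T') (h₀ : T.H) (ι : T'.H → T.H) (f : T.V → T'.V)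
    (hc : IsContraction T T' R R' h₀ ι f) :
    Set.BijOn (fun F : T.H → ℝ => F ∘ ι) T.unitFlows T'.unitFlows ∧
    ∀ F ∈ T.unitFlows,
      ((∀ h, ∃ z : ℤ, F h = (z : ℝ)) ↔ (∀ h', ∃ z : ℤ, F (ι h') = (z : ℝ))) := by
  classical
  have hPne : ∀ h : T.H, (T.vert h = T.vert h₀ ∧ T.side h = !(T.side h₀)) →
      h ≠ h₀ ∧ h ≠ T.op h₀ := by
    rintro h ⟨hv, hs⟩
    constructor
    · rintro rfl
      simp at hs
    · rintro rfl
      exact hc.v_ne hv.symm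
  constructor
  · refine ⟨?_, ?_, ?_⟩
    · -- MapsTo
      intro F hF
      obtain ⟨⟨hop, hcons⟩, hnn, hstr⟩ := hF
      refine ⟨⟨?_, ?_⟩, ?_, ?_⟩
      · intro h
        show F (ι (T'.op h)) = F (ι h)
        rw [← hc.op_ι, hop]
      · intro v' hv'
        obtain ⟨v, rfl⟩ := hc.surj_f v'
        simp only [Function.comp_apply]
        by_cases hm : f v = f (T.vert h₀)
        · rw [hm]
          obtain ⟨a₀', hva⟩ := hc.exists_a₀
          apply cons_iff T' _ _ (T'.side a₀')
          rw [hc.sumMa hva F, hc.sumMb hva F]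
          have k1 := hc.flow_h₀ ⟨hop, hcons⟩
          have k2 := cons_b T (T.vert (T.op h₀)) F (hcons _ hc.v₂_internal)
            (T.side (T.op h₀))
          have k3 : F (T.op h₀) = F h₀ := hop h₀
          linarith
        · have hv1 : v ≠ T.vert h₀ := fun e => hm (by rw [e])
          have hv2 : v ≠ T.vert (T.op h₀) := fun e => hm (by rw [e]; exact hc.glue.symm)
          have hvI : T.Internal v := by
            have hd := hc.deg_eq hv1 hv2
            have h2 : 2 ≤ T'.degree (f v) := hv'
            show 2 ≤ T.degree v
            omega
          obtain ⟨h₁, hh₁⟩ := T.vert_cover v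
          obtain ⟨h₁', rfl⟩ := hc.mem_range' (h := h₁)
            (fun e => hv1 (by rw [← hh₁, e])) (fun e => hv2 (by rw [← hh₁, e]))
          apply cons_iff T' _ _ (T'.side h₁')
          rw [hc.sumR1 hv1 hv2 hh₁ F, hc.sumR2 hv1 hv2 hh₁ F]
          exact cons_b T v F (hcons v hvI) (T.side (ι h₁'))
      · intro h
        exact hnn _
      · rw [← hc.strength_eq (F := F) (F' := F ∘ ι) (fun h' => rfl)]
        exact hstr
    · -- InjOn
      intro F hF G hG hFG
      have hFG' : ∀ h', F (ι h') = G (ι h') := fun h' => congrFun hFG h'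
      have key : ∀ K : T.H → ℝ, T.IsFlow K → K h₀ =
          ∑ h' ∈ Finset.univ.filter
            (fun h' => T.vert (ι h') = T.vert h₀ ∧ T.side (ι h') = !(T.side h₀)),
            K (ι h') := by
        intro K hK
        rw [hc.flow_h₀ hK]
        exact hc.sum_filt _ hPne K
      have keyFG : F h₀ = G h₀ := by
        rw [key F hF.1, key G hG.1]
        exact Finset.sum_congr rfl fun h' _ => hFG' h'
      funext h
      by_cases e1 : h = h₀
      · subst e1
        exact keyFG
      · by_cases e2 : h = T.op h₀
        · subst e2
          rw [hF.1.1 h₀, hG.1.1 h₀]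
          exact keyFG
        · obtain ⟨h', rfl⟩ := hc.mem_range' e1 e2
          exact hFG' h'
    · -- SurjOn
      intro F' hF'
      obtain ⟨⟨hop', hcons'⟩, hnn', hstr'⟩ := hF'
      obtain ⟨a₀', hva⟩ := hc.exists_a₀
      have : Nonempty T'.H := ⟨a₀'⟩
      set S : ℝ := ∑ h' ∈ Finset.univ.filter
        (fun h' => T.vert (ι h') = T.vert h₀ ∧ T.side (ι h') = !(T.side h₀)), F' h'
        with hSdef
      obtain ⟨Fx, hFx0, hFxo, hFxι⟩ : ∃ Fx : T.H → ℝ,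
          Fx h₀ = S ∧ Fx (T.op h₀) = S ∧ ∀ h', Fx (ι h') = F' h' := by
        refine ⟨fun h => if h = h₀ ∨ h = T.op h₀ then S
          else F' (Function.invFun ι h), ?_, ?_, ?_⟩
        · dsimp only
          rw [if_pos (Or.inl rfl)]
        · dsimp only
          rw [if_pos (Or.inr rfl)]
        · intro h'
          have h1 := hc.ι_ne_h₀ h'
          dsimp only
          rw [if_neg (not_or.mpr ⟨h1.1, h1.2⟩),
            Function.leftInverse_invFun hc.inj_ι h']
      have hS1 : ∑ h ∈ Finset.univ.filter
          (fun h => T.vert h = T.vert h₀ ∧ T.side h = !(T.side h₀)), Fx h = S := by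
        rw [hSdef]
        exact hc.sum_filt' _ hPne hFxι
      have hFxop : ∀ h, Fx (T.op h) = Fx h := by
        intro h
        by_cases e1 : h = h₀
        · subst e1
          rw [hFxo, hFx0]
        · by_cases e2 : h = T.op h₀
          · subst e2
            rw [T.op_op, hFx0, hFxo]
          · obtain ⟨h', rfl⟩ := hc.mem_range' e1 e2
            rw [hc.op_ι h', hFxι, hFxι]
            exact hop' h'
      have hFxcons : ∀ v, T.Internal v →
          ∑ h ∈ Finset.univ.filter (fun h => T.vert h = v ∧ T.side h = true), Fx h =
          ∑ h ∈ Finset.univ.filter (fun h => T.vert h = v ∧ T.side h = false), Fx h := by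
        intro v hvI
        by_cases hv1 : v = T.vert h₀
        · subst hv1
          apply cons_iff T _ _ (T.side h₀)
          rw [hc.class_h₀, Finset.sum_singleton, hFx0]
          exact hS1.symm
        · by_cases hv2 : v = T.vert (T.op h₀)
          · subst hv2
            apply cons_iff T _ _ (T.side (T.op h₀))
            have eMa := hc.sumMa hva Fx
            have eMb := hc.sumMb hva Fx
            have c1 : ∑ h' ∈ Finset.univ.filter
                (fun h' => T'.vert h' = f (T.vert h₀) ∧ T'.side h' = T'.side a₀'),
                Fx (ι h') =
                ∑ h' ∈ Finset.univ.filter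
                (fun h' => T'.vert h' = f (T.vert h₀) ∧ T'.side h' = T'.side a₀'),
                F' h' := Finset.sum_congr rfl fun h' _ => hFxι h'
            have c2 : ∑ h' ∈ Finset.univ.filter
                (fun h' => T'.vert h' = f (T.vert h₀) ∧ T'.side h' = !(T'.side a₀')),
                Fx (ι h') =
                ∑ h' ∈ Finset.univ.filter
                (fun h' => T'.vert h' = f (T.vert h₀) ∧ T'.side h' = !(T'.side a₀')),
                F' h' := Finset.sum_congr rfl fun h' _ => hFxι h'
            have hw := cons_b T' (f (T.vert h₀)) F' (hcons' _ hc.w_internal) (T'.side a₀')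
            linarith
          · have hvI' : T'.Internal (f v) := by
              have hd := hc.deg_eq hv1 hv2
              have h2 : 2 ≤ T.degree v := hvI
              show 2 ≤ T'.degree (f v)
              omega
            obtain ⟨h₁, hh₁⟩ := T.vert_cover v
            obtain ⟨h₁', rfl⟩ := hc.mem_range' (h := h₁)
              (fun e => hv1 (by rw [← hh₁, e])) (fun e => hv2 (by rw [← hh₁, e]))
            apply cons_iff T _ _ (T.side (ι h₁'))
            have e1 := hc.sumR1 hv1 hv2 hh₁ Fx
            have e2 := hc.sumR2 hv1 hv2 hh₁ Fx
            have c1 : ∑ h' ∈ Finset.univ.filter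
                (fun h' => T'.vert h' = f v ∧ T'.side h' = T'.side h₁'), Fx (ι h') =
                ∑ h' ∈ Finset.univ.filter
                (fun h' => T'.vert h' = f v ∧ T'.side h' = T'.side h₁'), F' h' :=
              Finset.sum_congr rfl fun h' _ => hFxι h'
            have c2 : ∑ h' ∈ Finset.univ.filter
                (fun h' => T'.vert h' = f v ∧ T'.side h' = !(T'.side h₁')), Fx (ι h') =
                ∑ h' ∈ Finset.univ.filter
                (fun h' => T'.vert h' = f v ∧ T'.side h' = !(T'.side h₁')), F' h' :=
              Finset.sum_congr rfl fun h' _ => hFxι h'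
            have hw := cons_b T' (f v) F' (hcons' _ hvI') (T'.side h₁')
            linarith
      have hFxnn : ∀ h, 0 ≤ Fx h := by
        have hSnn : 0 ≤ S := by
          rw [hSdef]
          exact Finset.sum_nonneg fun h' _ => hnn' h'
        intro h
        by_cases e1 : h = h₀
        · subst e1
          rw [hFx0]
          exact hSnn
        · by_cases e2 : h = T.op h₀
          · subst e2
            rw [hFxo]
            exact hSnn
          · obtain ⟨h', rfl⟩ := hc.mem_range' e1 e2
            rw [hFxι]
            exact hnn' h'
      refine ⟨Fx, ⟨⟨hFxop, hFxcons⟩, hFxnn, ?_⟩, funext fun h' => hFxι h'⟩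
      rw [hc.strength_eq hFxι]
      exact hstr'
  · -- lattice points
    intro F hF
    constructor
    · intro hall h'
      exact hall (ι h')
    · intro hι
      have key : ∃ z : ℤ, F h₀ = (z : ℝ) := by
        choose g hg using hι
        refine ⟨∑ h' ∈ Finset.univ.filter
          (fun h' => T.vert (ι h') = T.vert h₀ ∧ T.side (ι h') = !(T.side h₀)), g h', ?_⟩
        rw [hc.flow_h₀ hF.1, hc.sum_filt _ hPne F]
        push_cast
        exact Finset.sum_congr rfl fun h' _ => hg h'
      intro h
      by_cases e1 : h = h₀
      · subst e1
        exact key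
      · by_cases e2 : h = T.op h₀
        · subst e2
          rw [hF.1.1 h₀]
          exact key
        · obtain ⟨h', rfl⟩ := hc.mem_range' e1 e2
          exact hι h'
end

section
/- Let G be a signed graph on vertex set [n+1] with netflow vector a = (2,0,...,0), and construct the turbulence chart (G',∼) by splitting vertex 1 into degree-1 fringe vertices (one per incident half-edge) and, at each internal vertex v ∈ {2,...,n+1}, letting ∼_v separate the half-edges of positive incidence from those of negative incidence. Then the signed flow polytope of (G,a) equals F₁(G',∼) under the natural identification of edges, provided every internal vertex of G' has half-edges of both incidence signs. -/
open Finset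

/-- A signed graph on vertex set `Fin (n+1)`: each edge has two (ordered) endpoints
and a sign (`true` = positive); loops are positive, and negative edges go from a
smaller vertex (where they are positively incident) to a larger one (where they are
negatively incident). -/
structure SignedGraph (n : ℕ) where
  E : Type
  [fintE : Fintype E]
  [decE : DecidableEq E]
  fst : E → Fin (n + 1)
  snd : E → Fin (n + 1)
  sign : E → Bool
  loop_pos : ∀ e, fst e = snd e → sign e = true
  neg_lt : ∀ e, sign e = false → fst e < snd e

attribute [instance] SignedGraph.fintE SignedGraph.decE

namespace SignedGraph

variable {n : ℕ} (S : SignedGraph n)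

/-- Edges negatively incident to `v`. -/
def negIncAt (v : Fin (n + 1)) : Finset S.E :=
  Finset.univ.filter fun e => S.sign e = false ∧ S.snd e = v

/-- Non-loop edges positively incident to `v`. -/
def posNonloopAt (v : Fin (n + 1)) : Finset S.E :=
  Finset.univ.filter fun e => S.fst e ≠ S.snd e ∧
    ((S.sign e = true ∧ (S.fst e = v ∨ S.snd e = v)) ∨
     (S.sign e = false ∧ S.fst e = v))

/-- Loops at `v`. -/
def loopAt (v : Fin (n + 1)) : Finset S.E :=
  Finset.univ.filter fun e => S.fst e = S.snd e ∧ S.fst e = v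

/-- The signed flow polytope of `(S, a)`. -/
def aflowSet (a : Fin (n + 1) → ℝ) : Set (S.E → ℝ) :=
  {F | (∀ e, 0 ≤ F e) ∧
    ∀ v, (∑ e ∈ S.negIncAt v, F e) + a v =
      (∑ e ∈ S.posNonloopAt v, F e) + ∑ e ∈ S.loopAt v, 2 * F e}

end SignedGraph

private lemma comb_lemma {n : ℕ} (S : SignedGraph n) (F : S.E → ℝ) (v : Fin (n+1)) :
    (∑ e ∈ Finset.univ.filter (fun e => S.fst e = v), F e) +
    (∑ e ∈ Finset.univ.filter (fun e => S.snd e = v ∧ S.sign e = true), F e) =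
    (∑ e ∈ S.posNonloopAt v, F e) + ∑ e ∈ S.loopAt v, 2 * F e := by
  unfold SignedGraph.posNonloopAt SignedGraph.loopAt
  rw [Finset.sum_filter, Finset.sum_filter, Finset.sum_filter, Finset.sum_filter,
      ← Finset.sum_add_distrib, ← Finset.sum_add_distrib]
  refine Finset.sum_congr rfl fun e _ => ?_
  have hl := S.loop_pos e
  by_cases h1 : S.fst e = S.snd e <;> by_cases h2 : S.fst e = v <;>
    by_cases h3 : S.snd e = v <;> by_cases h4 : S.sign e = true <;>
    simp_all <;> ring

private lemma split2_lemma {n : ℕ} (S : SignedGraph n) (F : S.E → ℝ) :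
    (∑ e ∈ Finset.univ.filter (fun e => S.snd e = (0 : Fin (n+1))), F e) =
    (∑ e ∈ Finset.univ.filter (fun e => S.snd e = 0 ∧ S.sign e = true), F e) +
    (∑ e ∈ S.negIncAt 0, F e) := by
  unfold SignedGraph.negIncAt
  rw [Finset.sum_filter, Finset.sum_filter, Finset.sum_filter,
    ← Finset.sum_add_distrib]
  refine Finset.sum_congr rfl fun e _ => ?_
  by_cases h1 : S.snd e = 0 <;> by_cases h2 : S.sign e = true <;> simp_all

private lemma negzero_lemma {n : ℕ} (S : SignedGraph n) (F : S.E → ℝ) :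
    ∑ e ∈ S.negIncAt 0, F e = 0 := by
  apply Finset.sum_eq_zero
  intro e he
  simp only [SignedGraph.negIncAt, Finset.mem_filter, Finset.mem_univ,
    true_and] at he
  have h1 := S.neg_lt e he.1
  rw [he.2] at h1
  exact absurd h1 (Fin.not_lt_zero _)

/-- For a signed graph `S` on `[n+1]` with netflow `(2,0,…,0)`, the
turbulence chart `T` obtained by splitting vertex `1` (here `0 : Fin (n+1)`) into
fringe vertices and separating, at each internal vertex, half-edges of positive
incidence (`side = true`) from those of negative incidence has the same polytope:
the signed flow polytope of `(S,(2,0,…,0))` equals `F₁(T)` under the natural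
identification of edges. The correspondence is described by the equivalence `eH`
with `S.E × Bool` (`false` = first endpoint, `true` = second endpoint) and the
vertex map `vmap`. -/
theorem signed_flow_polytope_eq_turbulence_polytope
    {n : ℕ} (S : SignedGraph n) (T : TurbChart)
    (eH : T.H ≃ S.E × Bool) (vmap : T.V → Fin (n + 1))
    (hop : ∀ (a : S.E) (b : Bool), T.op (eH.symm (a, b)) = eH.symm (a, !b))
    (hvert : ∀ a : S.E, vmap (T.vert (eH.symm (a, false))) = S.fst a ∧
      vmap (T.vert (eH.symm (a, true))) = S.snd a)
    (hfringe : ∀ h : T.H, T.Fringe (T.vert h) ↔ vmap (T.vert h) = 0)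
    (hfrinj : ∀ h g : T.H, T.Fringe (T.vert h) → T.vert h = T.vert g → h = g)
    (hintinj : ∀ u w : T.V, T.Internal u → T.Internal w → vmap u = vmap w → u = w)
    (hside : ∀ a : S.E, T.side (eH.symm (a, false)) = true ∧
      T.side (eH.symm (a, true)) = S.sign a) :
    ∀ F : S.E → ℝ,
      F ∈ S.aflowSet (fun v => if v = 0 then 2 else 0) ↔
        (fun h => F (eH h).1) ∈ T.unitFlows := by

  intro F
  have hGsymm : ∀ (e : S.E) (b : Bool), F ((eH (eH.symm (e, b))).1) = F e := by
    intro e b; rw [Equiv.apply_symm_apply]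
  have hopinv : ∀ h, F ((eH (T.op h)).1) = F ((eH h).1) := by
    intro h
    have h1 : T.op h = eH.symm ((eH h).1, !(eH h).2) := by
      conv_lhs => rw [show h = eH.symm ((eH h).1, (eH h).2) by simp]
      rw [hop]
    rw [h1, hGsymm]
  have transport : ∀ (P : T.H → Prop) (_ : DecidablePred P),
      ∑ h ∈ Finset.univ.filter P, F ((eH h).1) =
      ∑ e : S.E, ((if P (eH.symm (e, false)) then F e else 0) +
                  (if P (eH.symm (e, true)) then F e else 0)) := by
    intro P _
    rw [Finset.sum_filter, ← Equiv.sum_comp eH.symm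
        (fun h => if P h then F ((eH h).1) else 0), Fintype.sum_prod_type]
    refine Finset.sum_congr rfl fun e _ => ?_
    rw [Fintype.sum_bool, add_comm]
    simp
  have Strue : ∀ v : Fin (n+1),
      ∑ h ∈ Finset.univ.filter (fun h => vmap (T.vert h) = v ∧ T.side h = true),
        F ((eH h).1) =
      (∑ e ∈ Finset.univ.filter (fun e => S.fst e = v), F e) +
      (∑ e ∈ Finset.univ.filter (fun e => S.snd e = v ∧ S.sign e = true), F e) := by
    intro v
    rw [transport _ inferInstance, Finset.sum_filter, Finset.sum_filter,
      ← Finset.sum_add_distrib]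
    refine Finset.sum_congr rfl fun e _ => ?_
    refine congrArg₂ (· + ·) (if_congr ?_ rfl rfl) (if_congr ?_ rfl rfl)
    · rw [(hvert e).1, (hside e).1]; simp
    · rw [(hvert e).2, (hside e).2]
  have Sfalse : ∀ v : Fin (n+1),
      ∑ h ∈ Finset.univ.filter (fun h => vmap (T.vert h) = v ∧ T.side h = false),
        F ((eH h).1) =
      ∑ e ∈ S.negIncAt v, F e := by
    intro v
    rw [transport _ inferInstance]
    unfold SignedGraph.negIncAt
    rw [Finset.sum_filter]
    refine Finset.sum_congr rfl fun e _ => ?_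
    have e1 : (vmap (T.vert (eH.symm (e, false))) = v ∧
        T.side (eH.symm (e, false)) = false) ↔ False := by
      rw [(hside e).1]; simp
    have e2 : (vmap (T.vert (eH.symm (e, true))) = v ∧
        T.side (eH.symm (e, true)) = false) ↔ (S.sign e = false ∧ S.snd e = v) := by
      rw [(hvert e).2, (hside e).2]; exact and_comm
    rw [if_congr e1 rfl rfl, if_congr e2 rfl rfl]
    simp
  have Sfr :
      ∑ h ∈ Finset.univ.filter (fun h => T.Fringe (T.vert h)), F ((eH h).1) =
      (∑ e ∈ Finset.univ.filter (fun e => S.fst e = 0), F e) +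
      (∑ e ∈ Finset.univ.filter (fun e => S.snd e = 0), F e) := by
    have hfe : (Finset.univ.filter (fun h => T.Fringe (T.vert h))) =
           (Finset.univ.filter (fun h => vmap (T.vert h) = 0)) := by
      apply Finset.filter_congr; intro h _; simpa using hfringe h
    rw [hfe, transport _ inferInstance, Finset.sum_filter, Finset.sum_filter,
      ← Finset.sum_add_distrib]
    refine Finset.sum_congr rfl fun e _ => ?_
    exact congrArg₂ (· + ·) (if_congr (by rw [(hvert e).1]) rfl rfl)
      (if_congr (by rw [(hvert e).2]) rfl rfl)
  have hdeg1 : ∀ h : T.H, 1 ≤ T.degree (T.vert h) := by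
    intro h
    have hm : h ∈ Finset.univ.filter (fun g => T.vert g = T.vert h) := by simp
    unfold TurbChart.degree
    exact Finset.card_pos.2 ⟨h, hm⟩
  have hinternal : ∀ h : T.H, vmap (T.vert h) ≠ 0 → T.Internal (T.vert h) := by
    intro h hv
    have h1 := hdeg1 h
    have h2 : ¬ T.Fringe (T.vert h) := fun hf => hv ((hfringe h).1 hf)
    unfold TurbChart.Internal
    unfold TurbChart.Fringe at h2
    omega
  have hIvmap : ∀ w, T.Internal w → vmap w ≠ 0 := by
    intro w hw
    obtain ⟨h, rfl⟩ := T.vert_cover w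
    intro h0
    have h1 := (hfringe h).2 h0
    unfold TurbChart.Internal at hw
    unfold TurbChart.Fringe at h1
    omega
  have hVeq : ∀ (w : T.V), T.Internal w → ∀ b : Bool,
      Finset.univ.filter (fun h => T.vert h = w ∧ T.side h = b) =
      Finset.univ.filter (fun h => vmap (T.vert h) = vmap w ∧ T.side h = b) := by
    intro w hw b
    apply Finset.filter_congr
    intro h _
    refine and_congr_left' ⟨fun h' => by rw [h'], fun h' => ?_⟩
    exact hintinj _ _ (hinternal h (h' ▸ hIvmap w hw)) hw h'
  have flowiff :
      (∀ w, T.Internal w →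
        ∑ h ∈ Finset.univ.filter (fun h => T.vert h = w ∧ T.side h = true),
          F ((eH h).1) =
        ∑ h ∈ Finset.univ.filter (fun h => T.vert h = w ∧ T.side h = false),
          F ((eH h).1)) ↔
      (∀ v : Fin (n+1), v ≠ 0 →
        ∑ h ∈ Finset.univ.filter (fun h => vmap (T.vert h) = v ∧ T.side h = true),
          F ((eH h).1) =
        ∑ h ∈ Finset.univ.filter (fun h => vmap (T.vert h) = v ∧ T.side h = false),
          F ((eH h).1)) := by
    constructor
    · intro Hw v hv
      by_cases hex : ∃ h : T.H, vmap (T.vert h) = v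
      · obtain ⟨h₀, hh₀⟩ := hex
        have hint := hinternal h₀ (by rw [hh₀]; exact hv)
        have h1 := Hw _ hint
        rw [hVeq _ hint true, hVeq _ hint false, hh₀] at h1
        exact h1
      · push_neg at hex
        rw [Finset.sum_eq_zero, Finset.sum_eq_zero]
        · intro h hh; exact absurd (Finset.mem_filter.1 hh).2.1 (hex h)
        · intro h hh; exact absurd (Finset.mem_filter.1 hh).2.1 (hex h)
    · intro Hv w hw
      have h1 := Hv (vmap w) (hIvmap w hw)
      rw [hVeq _ hw true, hVeq _ hw false]
      exact h1
  simp only [SignedGraph.aflowSet, TurbChart.unitFlows, TurbChart.IsFlow,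
    TurbChart.strength, Set.mem_setOf_eq]
  constructor
  · rintro ⟨hpos, heq⟩
    refine ⟨⟨hopinv, ?_⟩, fun h => hpos _, ?_⟩
    · refine flowiff.2 fun v hv => ?_
      have h0 := heq v
      rw [if_neg hv, add_zero] at h0
      rw [Strue, Sfalse, comb_lemma S F v, h0]
    · have h0 := heq 0
      rw [if_pos rfl, negzero_lemma S F, zero_add] at h0
      rw [Sfr, split2_lemma S F, negzero_lemma S F, add_zero,
        comb_lemma S F 0, ← h0]
      norm_num
  · rintro ⟨⟨hopG, hflow⟩, hpos, hstr⟩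
    refine ⟨fun e => by simpa using hpos (eH.symm (e, false)), ?_⟩
    intro v
    by_cases hv : v = 0
    · subst hv
      rw [if_pos rfl, negzero_lemma S F, zero_add]
      rw [Sfr, split2_lemma S F, negzero_lemma S F, add_zero,
        comb_lemma S F 0] at hstr
      linarith
    · rw [if_neg hv, add_zero]
      have h1 := flowiff.1 hflow v hv
      rw [Strue, Sfalse, comb_lemma S F v] at h1
      exact h1.symm
end

section
/- Let (G,∼,R) be a framed turbulence chart that is amply framed. Then the reduced nonnegative space F_{≥0,red} := F_{≥0}/ℝE equals the full reduced space F_red := F/ℝE, where F is the space of all (not necessarily nonnegative) flows, F_{≥0} the cone of nonnegative flows, and ℝE is the linear span of the indicator vectors of exceptional trails. -/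
/-!
Along a string, every arrival at an internal vertex on one side is immediately followed by a
departure on the other side; the ends of a route lie at fringe vertices and a band closes up. So
the indicator vector of a trail is a flow, and the span of exceptional trails consists of flows.
Given a flow `F`, every edge `h` with `F h < 0` is valid, hence lies on an exceptional trail by
ampleness; adding `-F h` times that trail's indicator for each such `h` yields a nonnegative flow
congruent to `F`.
-/

open Finset

namespace TurbChart

variable (T : TurbChart)

/-- An edge (half-edge) is valid if some flow is nonzero on it. -/
def ValidEdge (h : T.H) : Prop := ∃ F : T.H → ℝ, T.IsFlow F ∧ F h ≠ 0

/-- A trail is exceptional if it is compatible with every trail. -/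
def Exceptional (R : Framing T) (t : List T.H × Bool) : Prop :=
  T.IsTrail t ∧ ∀ t', T.IsTrail t' → T.Compatible R t t'

/-- Amply framed: every valid edge is part of an exceptional trail. -/
def AmplyFramed (R : Framing T) : Prop :=
  ∀ h, T.ValidEdge h → ∃ t, T.Exceptional R t ∧ (h ∈ t.1 ∨ T.op h ∈ t.1)

/-- The linear span `ℝE` of the indicator vectors of exceptional trails. -/
def exSpan (R : Framing T) : Submodule ℝ (T.H → ℝ) :=
  Submodule.span ℝ {x | ∃ t, T.Exceptional R t ∧ x = T.indicT t}

end TurbChart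

theorem List.countP_dropLast_eq_countP_tail_of_isChain {α : Type*} {R : α → α → Prop}
    {p q : α → Bool} (hpq : ∀ a b, R a b → p a = q b) :
    ∀ {l : List α}, l.IsChain R → l.dropLast.countP p = l.tail.countP q
  | [], _ | [_], _ => rfl
  | a :: b :: l, hl => by
    rw [List.isChain_cons_cons] at hl
    have ih := List.countP_dropLast_eq_countP_tail_of_isChain hpq hl.2
    rw [List.tail_cons] at ih
    rw [List.dropLast_cons_cons, List.tail_cons, List.countP_cons, List.countP_cons, ih,
      hpq a b hl.1]

theorem AddSubmonoid.exists_mem_nonneg_add {ι M : Type*} [Fintype ι] [AddCommGroup M]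
    [PartialOrder M] [IsOrderedAddMonoid M] (S : AddSubmonoid (ι → M)) (F : ι → M)
    (h : ∀ i, ∃ P ∈ S, 0 ≤ P ∧ -F i ≤ P i) : ∃ P ∈ S, 0 ≤ F + P := by
  choose P hPS hP0 hFP using h
  refine ⟨∑ i, P i, _root_.sum_mem fun i _ => hPS i, fun j => ?_⟩
  have hPj : P j j ≤ (∑ i, P i) j := by
    rw [Finset.sum_apply]
    exact Finset.single_le_sum (fun i _ => hP0 i j) (Finset.mem_univ j)
  exact neg_le_iff_add_nonneg'.1 ((hFP j).trans hPj)

theorem Finset.sum_univ_filter_count_eq_countP {α : Type*} [Fintype α] [DecidableEq α]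
    (p : α → Prop) [DecidablePred p] (l : List α) : ∑ x with p x, l.count x = l.countP p := by
  rw [← Finset.sum_filter_count_eq_countP]
  refine (Finset.sum_subset (Finset.filter_subset_filter _ (Finset.subset_univ _)) ?_).symm
  intro x hx hxl
  exact List.count_eq_zero.2 fun hmem =>
    hxl (Finset.mem_filter.2 ⟨List.mem_toFinset.2 hmem, (Finset.mem_filter.1 hx).2⟩)

namespace TurbChart

def flowSubmodule (T : TurbChart) : Submodule ℝ (T.H → ℝ) where
  carrier := {F | T.IsFlow F}
  add_mem' {F G} hF hG := by
    refine ⟨fun h => ?_, fun v hv => ?_⟩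
    · simp [hF.1 h, hG.1 h]
    · simp only [Pi.add_apply, Finset.sum_add_distrib, hF.2 v hv, hG.2 v hv]
  zero_mem' := ⟨fun _ => rfl, fun _ _ => by simp⟩
  smul_mem' c F hF := by
    refine ⟨fun h => ?_, fun v hv => ?_⟩
    · simp [hF.1 h]
    · simp only [Pi.smul_apply, smul_eq_mul, ← Finset.mul_sum, hF.2 v hv]

variable {T : TurbChart}

lemma not_internal_of_fringe {v : T.V} (hv : T.Fringe v) : ¬ T.Internal v := by
  unfold Fringe at hv; unfold Internal; omega

lemma arrival_iff_departure {a c : T.H} (hv : T.vert (T.op a) = T.vert c)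
    (hs : T.side (T.op a) ≠ T.side c) (v : T.V) (b : Bool) :
    (T.vert (T.op a) = v ∧ T.side (T.op a) = b) ↔ (T.vert c = v ∧ T.side c = !b) := by
  rw [hv, Bool.eq_not_iff.2 hs]
  cases T.side c <;> cases b <;> simp

lemma IsString.countP_dropLast_op_eq_countP_tail {l : List T.H} (hl : T.IsString l)
    (v : T.V) (b : Bool) :
    l.dropLast.countP (fun a => T.vert (T.op a) = v ∧ T.side (T.op a) = b) =
      l.tail.countP (fun a => T.vert a = v ∧ T.side a = !b) :=
  List.countP_dropLast_eq_countP_tail_of_isChain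
    (fun _ _ ⟨hv, hs⟩ => decide_eq_decide.2 (arrival_iff_departure hv hs v b)) hl

lemma IsRoute.countP_op_eq_countP {l : List T.H} (hl : T.IsRoute l) {v : T.V}
    (hv : T.Internal v) (b : Bool) :
    l.countP (fun a => T.vert (T.op a) = v ∧ T.side (T.op a) = b) =
      l.countP (fun a => T.vert a = v ∧ T.side a = !b) := by
  obtain ⟨hs, hne, hhead, hlast⟩ := hl
  obtain ⟨a, l, rfl⟩ := List.exists_cons_of_ne_nil hne
  have hlast' : ¬ T.vert (T.op ((a :: l).getLast hne)) = v := fun h =>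
    not_internal_of_fringe (hlast _ (List.getLast?_eq_some_getLast hne)) (h ▸ hv)
  have hhead' : ¬ T.vert a = v := fun h => not_internal_of_fringe (hhead a rfl) (h ▸ hv)
  calc _ = ((a :: l).dropLast ++ [(a :: l).getLast hne]).countP
          (fun a => T.vert (T.op a) = v ∧ T.side (T.op a) = b) := by
        rw [List.dropLast_append_getLast]
    _ = l.countP (fun a => T.vert a = v ∧ T.side a = !b) := by
        rw [List.countP_append, hs.countP_dropLast_op_eq_countP_tail, List.tail_cons,
          List.countP_singleton]
        simp [hlast']
    _ = _ := by simp [hhead']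

lemma IsBand.countP_op_eq_countP {l : List T.H} (hl : T.IsBand l) (v : T.V) (b : Bool) :
    l.countP (fun a => T.vert (T.op a) = v ∧ T.side (T.op a) = b) =
      l.countP (fun a => T.vert a = v ∧ T.side a = !b) := by
  obtain ⟨hne, hs, -⟩ := hl
  obtain ⟨hs, -, hwrap⟩ := List.isChain_append.1 hs
  obtain ⟨a, l, rfl⟩ := List.exists_cons_of_ne_nil hne
  obtain ⟨hv, hside⟩ := hwrap _ (List.getLast?_eq_some_getLast hne) a rfl
  calc _ = ((a :: l).dropLast ++ [(a :: l).getLast hne]).countP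
          (fun a => T.vert (T.op a) = v ∧ T.side (T.op a) = b) := by
        rw [List.dropLast_append_getLast]
    _ = _ := by
        rw [List.countP_append, IsString.countP_dropLast_op_eq_countP_tail hs,
          List.countP_singleton, List.countP_cons, List.tail_cons]
        simp only [arrival_iff_departure hv hside v b]

lemma IsTrail.countP_op_eq_countP {t : List T.H × Bool} (ht : T.IsTrail t) {v : T.V}
    (hv : T.Internal v) (b : Bool) :
    t.1.countP (fun a => T.vert (T.op a) = v ∧ T.side (T.op a) = b) =
      t.1.countP (fun a => T.vert a = v ∧ T.side a = !b) := by
  obtain ⟨l, _ | _⟩ := t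
  · exact IsRoute.countP_op_eq_countP ht hv b
  · exact IsBand.countP_op_eq_countP ht v b

lemma count_op_eq_count_map_op (l : List T.H) (h : T.H) :
    l.count (T.op h) = (l.map T.op).count h := by
  rw [← List.count_map_of_injective l T.op (Function.Involutive.injective T.op_op), T.op_op]

lemma sum_filter_indic (l : List T.H) (p : T.H → Prop) [DecidablePred p] :
    ∑ h with p h, T.indic l h = (l.countP p + l.countP (fun a => p (T.op a)) : ℕ) := by
  simp only [indic]
  rw [← Nat.cast_sum, Finset.sum_add_distrib]
  simp only [count_op_eq_count_map_op, Finset.sum_univ_filter_count_eq_countP, List.countP_map]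
  rfl

lemma isFlow_indicT {t : List T.H × Bool} (ht : T.IsTrail t) : T.IsFlow (T.indicT t) := by
  refine ⟨fun h => ?_, fun v hv => ?_⟩
  · simp only [indicT, indic, T.op_op, add_comm]
  · simp only [indicT, sum_filter_indic, ht.countP_op_eq_countP hv, Bool.not_true,
      Bool.not_false]
    congr 1
    omega

lemma exSpan_le_flowSubmodule (R : Framing T) : T.exSpan R ≤ T.flowSubmodule :=
  Submodule.span_le.2 fun _ ⟨_, ht, hx⟩ => hx ▸ isFlow_indicT ht.1

lemma indic_nonneg (l : List T.H) : 0 ≤ T.indic l := fun _ => by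
  simp only [indic]; positivity

lemma one_le_indic {l : List T.H} {h : T.H} (hm : h ∈ l ∨ T.op h ∈ l) : 1 ≤ T.indic l h := by
  have : 1 ≤ l.count h + l.count (T.op h) := by
    rcases hm with hm | hm <;> have := List.count_pos_iff.2 hm <;> omega
  simp only [indic]
  exact_mod_cast this

lemma AmplyFramed.exists_nonneg_mem_exSpan {R : Framing T} (hamp : T.AmplyFramed R)
    {F : T.H → ℝ} (hF : T.IsFlow F) (h : T.H) : ∃ P ∈ T.exSpan R, 0 ≤ P ∧ -F h ≤ P h := by
  rcases le_or_gt 0 (F h) with hFh | hFh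
  · exact ⟨0, zero_mem _, le_rfl, by simpa using hFh⟩
  obtain ⟨t, ht, hmem⟩ := hamp h ⟨F, hF, hFh.ne⟩
  have hc : 0 ≤ -F h := neg_nonneg.2 hFh.le
  refine ⟨(-F h) • T.indicT t, Submodule.smul_mem _ _ (Submodule.subset_span ⟨t, ht, rfl⟩),
    smul_nonneg hc (indic_nonneg _), ?_⟩
  calc -F h = -F h * 1 := (mul_one _).symm
    _ ≤ -F h * T.indicT t h := mul_le_mul_of_nonneg_left (one_le_indic hmem) hc

end TurbChart

/-- If a framed turbulence chart is amply framed, then the reduced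
nonnegative space equals the full reduced space: every flow is congruent, modulo the
span of indicator vectors of exceptional trails, to a nonnegative flow. -/
theorem reduced_nonneg_eq_reduced_of_amplyFramed (T : TurbChart) (R : Framing T)
    (hamp : T.AmplyFramed R) :
    ∀ F : T.H → ℝ, T.IsFlow F →
      ∃ G : T.H → ℝ, T.IsFlow G ∧ (∀ h, 0 ≤ G h) ∧ F - G ∈ T.exSpan R := by
  intro F hF
  obtain ⟨P, hP, hFP⟩ := (T.exSpan R).toAddSubmonoid.exists_mem_nonneg_add F
    (hamp.exists_nonneg_mem_exSpan hF)
  refine ⟨F + P, T.flowSubmodule.add_mem hF (TurbChart.exSpan_le_flowSubmodule R hP), hFP, ?_⟩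
  simpa using (T.exSpan R).neg_mem hP
end

section
/- Let (G,∼,R) be a framed turbulence chart and let K̄ = K ∪ B be a bundle (a set of pairwise compatible trails, with K the routes and B the bands). Assume that every nonnegative flow has at most one representation as a bundle combination with all coefficients positive. Then the bundle simplihedron Δ₁(K̄) has vertex set exactly {I(p) : p ∈ K} and its recession cone is minimally generated by {I(B) : B ∈ B}; in particular Δ₁(K̄) = conv({I(p) : p ∈ K}) + cone({I(B) : B ∈ B}) is a minimal presentation and Δ₁(K̄) is a simplihedron. -/
open Finset

/-!
Uniqueness of positive bundle combinations says that the indicator vectors of the trails of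
the bundle are linearly independent: split a vanishing linear combination into its positive and
negative parts. Once this is known, `Δ₁(K̄)` is the injective linear image of the standard
polyhedron `{a ≥ 0 | ∑_{routes} a = 1}`, and everything is read off the coefficients: a point
with a positive band coefficient, or with two positive route coefficients, is the midpoint of two
perturbations of its coefficients; and a recession direction has coefficients growing linearly
along a ray, so they are nonnegative and vanish on routes.
-/

namespace TurbChart

variable {T : TurbChart} {R : Framing T} {K S : Finset (List T.H × Bool)}

theorem IsBundle.subset (hK : T.IsBundle R K) (hS : S ⊆ K) : T.IsBundle R S :=
  ⟨fun t ht => hK.1 t (hS ht), fun t₁ h₁ t₂ h₂ => hK.2.1 t₁ (hS h₁) t₂ (hS h₂),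
    fun t₁ h₁ t₂ h₂ => hK.2.2 t₁ (hS h₁) t₂ (hS h₂)⟩

theorem UniquePositiveCombos.eqOn_of_sum_eq (huniq : T.UniquePositiveCombos R)
    (hK : T.IsBundle R K) {a a' : List T.H × Bool → ℝ} (ha : ∀ t ∈ K, 0 ≤ a t)
    (ha' : ∀ t ∈ K, 0 ≤ a' t)
    (h : ∑ t ∈ K, a t • T.indicT t = ∑ t ∈ K, a' t • T.indicT t) :
    ∀ t ∈ K, a t = a' t := by
  have support_sum {c : List T.H × Bool → ℝ} (hc : ∀ t ∈ K, 0 ≤ c t) :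
      ∑ t ∈ K.filter (0 < c ·), c t • T.indicT t = ∑ t ∈ K, c t • T.indicT t :=
    sum_filter_of_ne fun t ht hne => (hc t ht).lt_of_ne' (left_ne_zero_of_smul hne)
  obtain ⟨h₁, h₂⟩ := huniq _ _ a a' (hK.subset (filter_subset _ K))
    (hK.subset (filter_subset _ K)) (fun t ht => (mem_filter.1 ht).2)
    (fun t ht => (mem_filter.1 ht).2) ((support_sum ha).trans (h.trans (support_sum ha').symm))
  intro t ht
  rcases (ha t ht).lt_or_eq with hpos | hzero
  · obtain ⟨t', ht', heq, hval⟩ := h₁ t (mem_filter.2 ⟨ht, hpos⟩)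
    obtain rfl := hK.2.2 t ht t' (mem_filter.1 ht').1 heq
    exact hval
  rcases (ha' t ht).lt_or_eq with hpos' | hzero'
  · obtain ⟨t', ht', heq, hval⟩ := h₂ t (mem_filter.2 ⟨ht, hpos'⟩)
    obtain rfl := hK.2.2 t' (mem_filter.1 ht').1 t ht heq
    exact hval
  · rw [← hzero, ← hzero']

theorem UniquePositiveCombos.linearIndepOn (huniq : T.UniquePositiveCombos R)
    (hK : T.IsBundle R K) : LinearIndepOn ℝ T.indicT (K : Set (List T.H × Bool)) := by
  refine linearIndepOn_finset_iff.2 fun f hf t ht => ?_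
  have hsplit : ∑ t ∈ K, (f t)⁺ • T.indicT t = ∑ t ∈ K, (f t)⁻ • T.indicT t := by
    rw [← sub_eq_zero, ← sum_sub_distrib, ← hf]
    simp only [← sub_smul, posPart_sub_negPart]
  rw [← posPart_sub_negPart (f t),
    huniq.eqOn_of_sum_eq hK (fun _ _ => posPart_nonneg _) (fun _ _ => negPart_nonneg _) hsplit t ht,
    sub_self]

end TurbChart

section UnitCombos

variable {ι E : Type*} [AddCommGroup E] [Module ℝ E]

/-- `T.unitBundleSimplihedron K` is `unitCombos T.indicT K Prod.snd`: the trails become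
arbitrary vectors `v t`, and `band t = false` marks the routes. -/
def unitCombos (v : ι → E) (K : Finset ι) (band : ι → Bool) : Set E :=
  {F | ∃ a : ι → ℝ, (∀ t ∈ K, 0 ≤ a t) ∧ F = ∑ t ∈ K, a t • v t ∧
    ∑ t ∈ K.filter (fun t => band t = false), a t = 1}

def recessionCone (A : Set E) : Set E :=
  {d | ∀ x ∈ A, ∀ s : ℝ, 0 ≤ s → x + s • d ∈ A}

theorem eq_zero_of_add_mem_of_sub_mem {A : Set E} {x w : E} (hx : x ∈ A.extremePoints ℝ)
    (h₁ : x + w ∈ A) (h₂ : x - w ∈ A) : w = 0 := by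
  have hmid : x ∈ openSegment ℝ (x + w) (x - w) :=
    ⟨1 / 2, 1 / 2, by norm_num, by norm_num, by norm_num, by module⟩
  simpa using hx.2 h₁ h₂ hmid

theorem nonneg_of_forall_nonneg_add_mul {x y : ℝ} (h : ∀ s : ℝ, 0 ≤ s → 0 ≤ x + s * y) :
    0 ≤ y := by
  by_contra! hy
  have hx := h 0 le_rfl
  have := h ((x + 1) / -y) (div_nonneg (by linarith) (by linarith))
  rw [div_mul_eq_mul_div, div_neg, mul_div_assoc, div_self hy.ne, mul_one] at this
  linarith

theorem LinearIndepOn.ne_sum_erase {R M : Type*} [Ring R] [Nontrivial R] [AddCommGroup M]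
    [Module R M] [DecidableEq ι] {v : ι → M} {s : Finset ι} {t : ι}
    (hv : LinearIndepOn R v (s : Set ι)) (ht : t ∈ s) (b : ι → R) :
    v t ≠ ∑ i ∈ s.erase t, b i • v i := by
  intro h
  refine hv.notMem_span ht (h ▸ Submodule.sum_mem _ fun i hi => Submodule.smul_mem _ _ ?_)
  exact Submodule.subset_span ⟨i, by rw [← Finset.coe_erase]; exact hi, rfl⟩

variable {v : ι → E} {K : Finset ι} {band : ι → Bool} {a c : ι → ℝ}

theorem add_sum_mem_unitCombos (ha : ∀ t ∈ K, 0 ≤ a t + c t)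
    (hs : ∑ t ∈ K.filter (fun t => band t = false), a t = 1)
    (hc : ∑ t ∈ K.filter (fun t => band t = false), c t = 0) :
    ∑ t ∈ K, a t • v t + ∑ t ∈ K, c t • v t ∈ unitCombos v K band :=
  ⟨a + c, ha, by simp only [Pi.add_apply, add_smul, sum_add_distrib],
    by simp only [Pi.add_apply, sum_add_distrib, hs, hc, add_zero]⟩

theorem eq_of_coeff_eq_zero_of_ne {F : E} {p : ι} (hp : p ∈ K) (hpb : band p = false)
    (hF : F = ∑ t ∈ K, a t • v t) (hs : ∑ t ∈ K.filter (fun t => band t = false), a t = 1)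
    (hz : ∀ t ∈ K, t ≠ p → a t = 0) : F = v p := by
  have hap : a p = 1 := by
    rw [← hs, sum_eq_single_of_mem p (mem_filter.2 ⟨hp, hpb⟩)
      fun t ht htp => hz t (mem_filter.1 ht).1 htp]
  rw [hF, sum_eq_single_of_mem p hp fun t ht htp => by rw [hz t ht htp, zero_smul], hap,
    one_smul]

section LinearIndependent

variable (hv : LinearIndepOn ℝ v (K : Set ι))
include hv

theorem coeff_eq_zero_of_mem_extremePoints (hs : ∑ t ∈ K.filter (fun t => band t = false), a t = 1)
    (hF : ∑ t ∈ K, a t • v t ∈ (unitCombos v K band).extremePoints ℝ)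
    (hca : ∀ t ∈ K, |c t| ≤ a t) (hc : ∑ t ∈ K.filter (fun t => band t = false), c t = 0) :
    ∀ t ∈ K, c t = 0 := by
  have hplus := add_sum_mem_unitCombos (v := v) (c := c)
    (fun t ht => by linarith [neg_abs_le (c t), hca t ht]) hs hc
  have hminus := add_sum_mem_unitCombos (v := v) (c := fun t => -c t)
    (fun t ht => by linarith [le_abs_self (c t), hca t ht]) hs
    (by simp only [sum_neg_distrib, hc, neg_zero])
  simp only [neg_smul, sum_neg_distrib, ← sub_eq_add_neg] at hminus
  exact linearIndepOn_finset_iff.1 hv c (eq_zero_of_add_mem_of_sub_mem hF hplus hminus)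

theorem band_coeff_eq_zero_of_mem_extremePoints (ha : ∀ t ∈ K, 0 ≤ a t)
    (hs : ∑ t ∈ K.filter (fun t => band t = false), a t = 1)
    (hF : ∑ t ∈ K, a t • v t ∈ (unitCombos v K band).extremePoints ℝ) {t : ι} (ht : t ∈ K)
    (htb : band t = true) : a t = 0 := by
  classical
  have hc := coeff_eq_zero_of_mem_extremePoints hv hs hF (c := Pi.single t (a t))
    (fun t' ht' => by
      rcases eq_or_ne t' t with rfl | hne
      · simp [abs_of_nonneg (ha t' ht')]
      · simp [hne, ha t' ht'])
    (by simp [sum_pi_single', htb])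
  simpa using hc t ht

theorem route_coeff_eq_zero_of_mem_extremePoints (ha : ∀ t ∈ K, 0 ≤ a t)
    (hs : ∑ t ∈ K.filter (fun t => band t = false), a t = 1)
    (hF : ∑ t ∈ K, a t • v t ∈ (unitCombos v K band).extremePoints ℝ) {p q : ι}
    (hp : p ∈ K) (hpb : band p = false) (hq : q ∈ K) (hqb : band q = false) (hpq : p ≠ q) :
    a p = 0 ∨ a q = 0 := by
  classical
  set ε := min (a p) (a q)
  have hε : 0 ≤ ε := le_min (ha p hp) (ha q hq)
  have hc := coeff_eq_zero_of_mem_extremePoints hv hs hF (c := Pi.single p ε - Pi.single q ε)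
    (fun t ht => by
      rcases eq_or_ne t p with rfl | htp
      · simp [hpq, abs_of_nonneg hε, ε]
      rcases eq_or_ne t q with rfl | htq
      · simp [htp, abs_of_nonneg hε, ε]
      · simp [htp, htq, ha t ht])
    (by simp [sum_sub_distrib, sum_pi_single', hp, hpb, hq, hqb])
  have hε0 : ε = 0 := by simpa [hpq] using hc p hp
  rcases min_choice (a p) (a q) with h | h
  · exact .inl (h ▸ hε0)
  · exact .inr (h ▸ hε0)

theorem extremePoints_unitCombos :
    (unitCombos v K band).extremePoints ℝ = v '' {t | t ∈ K ∧ band t = false} := by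
  classical
  ext F
  constructor
  · intro hF
    obtain ⟨a, ha, rfl, hs⟩ := hF.1
    obtain ⟨p, hp, hap⟩ := exists_ne_zero_of_sum_ne_zero (hs ▸ one_ne_zero)
    obtain ⟨hpK, hpb⟩ := mem_filter.1 hp
    refine ⟨p, ⟨hpK, hpb⟩, (eq_of_coeff_eq_zero_of_ne hpK hpb rfl hs fun t ht htp => ?_).symm⟩
    cases htb : band t
    · exact (route_coeff_eq_zero_of_mem_extremePoints hv ha hs hF ht htb hpK hpb htp).resolve_right
        hap
    · exact band_coeff_eq_zero_of_mem_extremePoints hv ha hs hF ht htb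
  · rintro ⟨p, ⟨hpK, hpb⟩, rfl⟩
    have hsingle : v p = ∑ t ∈ K, (Pi.single p 1 : ι → ℝ) t • v t := by
      simp [Pi.single_apply, hpK]
    refine mem_extremePoints_iff_left.2 ⟨⟨(Pi.single p 1 : ι → ℝ), fun t _ => ?_, hsingle, ?_⟩, ?_⟩
    · rw [Pi.single_apply]; split_ifs <;> norm_num
    · simp [sum_pi_single', hpK, hpb]
    rintro _ ⟨a₁, ha₁, rfl, hs₁⟩ _ ⟨a₂, ha₂, rfl, -⟩ ⟨c, d, hc, hd, -, hcd⟩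
    have hcoeff := linearIndepOn_finset_iffₛ.1 hv (fun t => c * a₁ t + d * a₂ t)
      (Pi.single p 1 : ι → ℝ)
      (by simpa [add_smul, mul_smul, sum_add_distrib, ← smul_sum, ← hsingle] using hcd)
    refine eq_of_coeff_eq_zero_of_ne hpK hpb rfl hs₁ fun t ht htp => ?_
    have hzero : c * a₁ t + d * a₂ t = 0 := by simpa [htp] using hcoeff t ht
    have h₁ := mul_nonneg hc.le (ha₁ t ht)
    have h₂ := mul_nonneg hd.le (ha₂ t ht)
    exact (mul_eq_zero.1 (by linarith : c * a₁ t = 0)).resolve_left hc.ne'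

theorem exists_coeff_of_mem_recessionCone {d : E} (ha : ∀ t ∈ K, 0 ≤ a t)
    (hs : ∑ t ∈ K.filter (fun t => band t = false), a t = 1)
    (hd : d ∈ recessionCone (unitCombos v K band)) :
    ∃ c : ι → ℝ, (∀ t ∈ K, 0 ≤ c t) ∧ ∑ t ∈ K.filter (fun t => band t = false), c t = 0 ∧
      d = ∑ t ∈ K, c t • v t := by
  have hF : ∑ t ∈ K, a t • v t ∈ unitCombos v K band := ⟨a, ha, rfl, hs⟩
  obtain ⟨e, -, he, hes⟩ := hd _ hF 1 zero_le_one
  refine ⟨fun t => e t - a t,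
    fun t ht => nonneg_of_forall_nonneg_add_mul (x := a t) fun s hs0 => ?_,
    by simp [sum_sub_distrib, hes, hs], by simp [sub_smul, sum_sub_distrib, ← he]⟩
  obtain ⟨e', he', he's, -⟩ := hd _ hF s hs0
  have hcoeff := linearIndepOn_finset_iffₛ.1 hv e' (fun t => a t + s * (e t - a t))
    (by
      simp only [add_smul, mul_smul, sub_smul, sum_add_distrib, ← smul_sum, sum_sub_distrib,
        ← he, ← he's, one_smul, add_sub_cancel_left]) t ht
  simpa [← hcoeff] using he' t ht

theorem recessionCone_unitCombos (hne : (unitCombos v K band).Nonempty) :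
    recessionCone (unitCombos v K band) =
      {d | ∃ b : ι → ℝ, (∀ t ∈ K.filter (fun t => band t = true), 0 ≤ b t) ∧
        d = ∑ t ∈ K.filter (fun t => band t = true), b t • v t} := by
  ext d
  constructor
  · intro hd
    obtain ⟨F, a, ha, rfl, hs⟩ := hne
    obtain ⟨c, hc, hcs, rfl⟩ := exists_coeff_of_mem_recessionCone hv ha hs hd
    have hroute : ∀ t ∈ K, band t = false → c t = 0 := fun t ht htb =>
      (sum_eq_zero_iff_of_nonneg fun t ht => hc t (mem_filter.1 ht).1).1 hcs t
        (mem_filter.2 ⟨ht, htb⟩)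
    refine ⟨c, fun t ht => hc t (mem_filter.1 ht).1, (sum_filter_of_ne fun t ht hne => ?_).symm⟩
    by_contra htb
    exact left_ne_zero_of_smul hne (hroute t ht (by simpa using htb))
  · rintro ⟨b, hb, rfl⟩ F ⟨a, ha, rfl, hs⟩ s hs0
    have hsmul : s • ∑ t ∈ K.filter (fun t => band t = true), b t • v t =
        ∑ t ∈ K, (if band t = true then s * b t else 0) • v t := by
      rw [smul_sum, sum_filter]
      refine sum_congr rfl fun t _ => ?_
      split_ifs <;> simp [mul_smul]
    rw [hsmul]
    refine add_sum_mem_unitCombos (fun t ht => ?_) hs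
      (sum_eq_zero fun t ht => by simp [(mem_filter.1 ht).2])
    split_ifs with htb
    · exact add_nonneg (ha t ht) (mul_nonneg hs0 (hb t (mem_filter.2 ⟨ht, htb⟩)))
    · simpa using ha t ht

theorem existsUnique_coeff_of_mem_unitCombos {F : E} (hF : F ∈ unitCombos v K band) :
    ∃! a : ι → ℝ, (∀ t, t ∉ K → a t = 0) ∧ (∀ t, 0 ≤ a t) ∧ F = ∑ t ∈ K, a t • v t ∧
      ∑ t ∈ K.filter (fun t => band t = false), a t = 1 := by
  classical
  obtain ⟨a, ha, rfl, hs⟩ := hF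
  refine ⟨fun t => if t ∈ K then a t else 0,
    ⟨fun t ht => if_neg ht, fun t => ?_, sum_congr rfl fun t ht => by simp only [if_pos ht], ?_⟩,
    ?_⟩
  · dsimp only
    split_ifs with ht
    exacts [ha t ht, le_rfl]
  · rw [← hs]
    exact sum_congr rfl fun t ht => if_pos (mem_filter.1 ht).1
  · rintro a' ⟨hzero, -, hsum, -⟩
    funext t
    by_cases ht : t ∈ K
    · rw [if_pos ht, linearIndepOn_finset_iffₛ.1 hv a' a hsum.symm t ht]
    · rw [if_neg ht, hzero t ht]

end LinearIndependent

end UnitCombos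

open scoped Classical

/-- For a bundle `K̄ = K ∪ B` of a framed turbulence chart, assuming
uniqueness of positive bundle combinations, the bundle simplihedron `Δ₁(K̄)` has
vertex set exactly the indicator vectors of the routes of `K̄`, its recession cone is
minimally generated by the indicator vectors of the bands of `K̄`, and `Δ₁(K̄)` is a
simplihedron: every point has a unique coefficient representation. -/
theorem bundle_simplihedron_minimal_presentation (T : TurbChart) (R : Framing T)
    (K : Finset (List T.H × Bool)) (hK : T.IsBundle R K)
    (huniq : T.UniquePositiveCombos R) :
    -- vertex set = route indicators
    (Set.extremePoints ℝ (T.unitBundleSimplihedron K) =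
      T.indicT '' {t | t ∈ K ∧ t.2 = false}) ∧
    -- the recession cone is generated by the band indicators ...
    ((T.unitBundleSimplihedron K).Nonempty →
      {d : T.H → ℝ | ∀ F ∈ T.unitBundleSimplihedron K, ∀ s : ℝ, 0 ≤ s →
          F + s • d ∈ T.unitBundleSimplihedron K} =
        {d | ∃ b : List T.H × Bool → ℝ,
          (∀ t ∈ K.filter (fun t => t.2 = true), 0 ≤ b t) ∧
          d = ∑ t ∈ K.filter (fun t => t.2 = true), b t • T.indicT t}) ∧
    -- ... minimally: no band indicator is a nonnegative combination of the others
    (∀ t ∈ K, t.2 = true →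
      ¬ ∃ b : List T.H × Bool → ℝ,
        (∀ t' ∈ (K.filter (fun t' => t'.2 = true)).erase t, 0 ≤ b t') ∧
        T.indicT t =
          ∑ t' ∈ (K.filter (fun t' => t'.2 = true)).erase t, b t' • T.indicT t') ∧
    -- Δ₁(K̄) is simplicial: unique coefficient representation of each point
    (∀ F ∈ T.unitBundleSimplihedron K,
      ∃! a : List T.H × Bool → ℝ,
        (∀ t, t ∉ K → a t = 0) ∧ (∀ t, 0 ≤ a t) ∧
        F = ∑ t ∈ K, a t • T.indicT t ∧
        ∑ t ∈ K.filter (fun t => t.2 = false), a t = 1) := by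
  have hv := huniq.linearIndepOn hK
  refine ⟨extremePoints_unitCombos hv, recessionCone_unitCombos hv, ?_,
    fun F hF => existsUnique_coeff_of_mem_unitCombos hv hF⟩
  rintro t ht htb ⟨b, -, hb⟩
  exact (hv.mono (coe_subset.2 (filter_subset _ K))).ne_sum_erase (mem_filter.2 ⟨ht, htb⟩) b hb
end

section
/- Let K̄₁ and K̄₂ be bundles of a framed turbulence chart (G,∼,R), and assume every nonnegative flow has at most one positive bundle combination representation. Then Δ₁(K̄₁) ∩ Δ₁(K̄₂) = Δ₁(K̄₁ ∩ K̄₂), i.e., a unit nonnegative flow lies in both bundle simplihedra if and only if it is a unit bundle combination of the trails common to both bundles. -/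
open Finset

namespace TurbChart

variable (T : TurbChart)

lemma op_injective : Function.Injective T.op := fun a b hab => by
  rw [← T.op_op a, hab, T.op_op]

lemma count_map_op (l : List T.H) (h : T.H) :
    (l.map T.op).count h = l.count (T.op h) := by
  conv_lhs => rw [← T.op_op h]
  exact List.count_map_of_injective l T.op T.op_injective (T.op h)

lemma indic_inv (l : List T.H) : T.indic (T.inv l) = T.indic l := by
  funext h
  simp only [indic, inv, List.count_reverse, T.count_map_op, T.op_op]
  push_cast
  ring

lemma indic_append_comm (x y : List T.H) :
    T.indic (y ++ x) = T.indic (x ++ y) := by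
  funext h
  simp only [indic, List.count_append]
  push_cast
  ring

lemma indicT_equiv {t₁ t₂ : List T.H × Bool} (h : T.TrailEquiv t₁ t₂) :
    T.indicT t₁ = T.indicT t₂ := by
  obtain ⟨hb, h2⟩ := h
  unfold indicT
  by_cases hB : t₁.2 = true
  · rw [if_pos hB] at h2
    obtain ⟨x, y, hxy, hor⟩ := h2
    rcases hor with hr | hr <;>
      rw [hxy, hr] <;>
      simp [T.indic_inv, T.indic_append_comm]
  · rw [if_neg hB] at h2
    rcases h2 with hr | hr <;> rw [hr]
    simp [T.indic_inv]

lemma trailEquiv_snd {t₁ t₂ : List T.H × Bool} (h : T.TrailEquiv t₁ t₂) :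
    t₁.2 = t₂.2 := h.1

lemma IsBundle.subset_s16 {T : TurbChart} {R : Framing T} {S K : Finset (List T.H × Bool)}
    (h : T.IsBundle R K) (hs : S ⊆ K) : T.IsBundle R S :=
  ⟨fun t ht => h.1 t (hs ht),
   fun t₁ h1 t₂ h2 => h.2.1 t₁ (hs h1) t₂ (hs h2),
   fun t₁ h1 t₂ h2 => h.2.2 t₁ (hs h1) t₂ (hs h2)⟩

end TurbChart

open scoped Classical

/-- Assuming uniqueness of positive bundle combinations, the
intersection of two bundle simplihedra is the bundle simplihedron of the trails
common (up to equivalence) to both bundles. -/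
theorem bundle_simplihedra_intersect (T : TurbChart) (R : Framing T)
    (K₁ K₂ : Finset (List T.H × Bool))
    (h₁ : T.IsBundle R K₁) (h₂ : T.IsBundle R K₂)
    (huniq : T.UniquePositiveCombos R) :
    T.unitBundleSimplihedron K₁ ∩ T.unitBundleSimplihedron K₂ =
      T.unitBundleSimplihedron
        (K₁.filter fun t => ∃ t' ∈ K₂, T.TrailEquiv t t') := by
  classical
  ext F
  constructor
  · rintro ⟨⟨a₁, ha₁0, ha₁F, ha₁s⟩, ⟨a₂, ha₂0, ha₂F, ha₂s⟩⟩
    set P : (List T.H × Bool) → Prop := fun t => ∃ t' ∈ K₂, T.TrailEquiv t t' with hP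
    set K : Finset (List T.H × Bool) := K₁.filter P with hK
    set S₁ : Finset (List T.H × Bool) := K₁.filter (fun t => 0 < a₁ t) with hS₁
    set S₂ : Finset (List T.H × Bool) := K₂.filter (fun t => 0 < a₂ t) with hS₂
    have e₁ : ∑ t ∈ S₁, a₁ t • T.indicT t = ∑ t ∈ K₁, a₁ t • T.indicT t := by
      refine Finset.sum_filter_of_ne fun t ht hne => ?_
      refine (ha₁0 t ht).lt_of_ne fun h0 => hne ?_
      rw [← h0, zero_smul]
    have e₂ : ∑ t ∈ S₂, a₂ t • T.indicT t = ∑ t ∈ K₂, a₂ t • T.indicT t := by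
      refine Finset.sum_filter_of_ne fun t ht hne => ?_
      refine (ha₂0 t ht).lt_of_ne fun h0 => hne ?_
      rw [← h0, zero_smul]
    have heq : ∑ t ∈ S₁, a₁ t • T.indicT t = ∑ t ∈ S₂, a₂ t • T.indicT t := by
      rw [e₁, e₂, ← ha₁F, ← ha₂F]
    obtain ⟨hu₁, _⟩ := huniq S₁ S₂ a₁ a₂ (h₁.subset_s16 (Finset.filter_subset _ _))
      (h₂.subset_s16 (Finset.filter_subset _ _))
      (fun t ht => (Finset.mem_filter.1 ht).2)
      (fun t ht => (Finset.mem_filter.1 ht).2) heq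
    have hsub : S₁ ⊆ K := by
      intro t ht
      obtain ⟨t₂, ht₂, hequiv, _⟩ := hu₁ t ht
      exact Finset.mem_filter.2 ⟨(Finset.mem_filter.1 ht).1,
        t₂, Finset.filter_subset _ _ ht₂, hequiv⟩
    refine ⟨fun t => if t ∈ S₁ then a₁ t else 0, fun t ht => ?_, ?_, ?_⟩
    · dsimp only
      split
      · exact ha₁0 t (Finset.mem_filter.1 (by assumption)).1
      · exact le_refl 0
    · rw [ha₁F, ← e₁]
      rw [← Finset.sum_subset hsub (fun t _ hts => by simp only [hts, if_false, zero_smul])]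
      exact Finset.sum_congr rfl fun t ht => by simp only [ht, if_true]
    · have step1 : ∑ t ∈ K.filter (fun t => t.2 = false),
          (if t ∈ S₁ then a₁ t else 0) = ∑ t ∈ S₁.filter (fun t => t.2 = false), a₁ t := by
        rw [← Finset.sum_subset (Finset.filter_subset_filter _ hsub)
          (fun t htK hts => by
            have hns : t ∉ S₁ := fun hmem => hts
              (Finset.mem_filter.2 ⟨hmem, (Finset.mem_filter.1 htK).2⟩)
            simp only [hns, if_false])]
        exact Finset.sum_congr rfl fun t ht => by
          simp only [(Finset.mem_filter.1 ht).1, if_true]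
      rw [step1, ← ha₁s]
      rw [hS₁, Finset.filter_comm]
      refine Finset.sum_filter_of_ne fun t ht hne => ?_
      exact (ha₁0 t (Finset.mem_filter.1 ht).1).lt_of_ne (Ne.symm hne)
  · rintro ⟨a, ha0, haF, has⟩
    set P : (List T.H × Bool) → Prop := fun t => ∃ t' ∈ K₂, T.TrailEquiv t t' with hP
    set K : Finset (List T.H × Bool) := K₁.filter P with hK
    have hK1 : K ⊆ K₁ := Finset.filter_subset _ _
    constructor
    · refine ⟨fun t => if t ∈ K then a t else 0, fun t ht => ?_, ?_, ?_⟩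
      · dsimp only
        split
        · exact ha0 t (by assumption)
        · exact le_refl 0
      · rw [haF, ← Finset.sum_subset hK1
          (fun t _ hts => by simp only [hts, if_false, zero_smul])]
        exact Finset.sum_congr rfl fun t ht => by simp only [ht, if_true]
      · rw [← has, ← Finset.sum_subset (Finset.filter_subset_filter _ hK1)
          (fun t htK hts => by
            have hns : t ∉ K := fun hmem => hts
              (Finset.mem_filter.2 ⟨hmem, (Finset.mem_filter.1 htK).2⟩)
            simp only [hns, if_false])]
        exact Finset.sum_congr rfl fun t ht => by
          simp only [(Finset.mem_filter.1 ht).1, if_true]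
    · -- membership in Δ₁(K₂)
      have hchoice : ∀ t ∈ K, ∃ s, s ∈ K₂ ∧ T.TrailEquiv t s := by
        intro t ht
        obtain ⟨s, hs, he⟩ := (Finset.mem_filter.1 ht).2
        exact ⟨s, hs, he⟩
      choose g hg1 hg2 using fun t (ht : t ∈ K) => hchoice t ht
      set g' : (List T.H × Bool) → (List T.H × Bool) :=
        fun t => if ht : t ∈ K then g t ht else t with hg'
      have hg'1 : ∀ t ∈ K, g' t ∈ K₂ := fun t ht => by
        simp only [hg', dif_pos ht]; exact hg1 t ht
      have hg'2 : ∀ t ∈ K, T.TrailEquiv t (g' t) := fun t ht => by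
        simp only [hg', dif_pos ht]; exact hg2 t ht
      refine ⟨fun s => ∑ t ∈ K.filter (fun t => g' t = s), a t,
        fun s _ => Finset.sum_nonneg fun t ht =>
          ha0 t (Finset.filter_subset _ _ ht), ?_, ?_⟩
      · rw [haF]
        rw [← Finset.sum_fiberwise_of_maps_to hg'1 (fun t => a t • T.indicT t)]
        refine Finset.sum_congr rfl fun s _ => ?_
        rw [Finset.sum_smul]
        refine Finset.sum_congr rfl fun t ht => ?_
        obtain ⟨htK, hgt⟩ := Finset.mem_filter.1 ht
        rw [← hgt, T.indicT_equiv (hg'2 t htK)]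
      · rw [← has]
        have hmaps : ∀ t ∈ K.filter (fun t => t.2 = false),
            g' t ∈ K₂.filter (fun t => t.2 = false) := by
          intro t ht
          obtain ⟨htK, htf⟩ := Finset.mem_filter.1 ht
          exact Finset.mem_filter.2 ⟨hg'1 t htK, by
            rw [← T.trailEquiv_snd (hg'2 t htK)]; exact htf⟩
        rw [← Finset.sum_fiberwise_of_maps_to hmaps a]
        refine Finset.sum_congr rfl fun s hs => ?_
        refine Finset.sum_congr ?_ fun _ _ => rfl
        ext t
        simp only [Finset.mem_filter]
        constructor
        · rintro ⟨htK, hgt⟩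
          refine ⟨⟨htK, ?_⟩, hgt⟩
          rw [T.trailEquiv_snd (hg'2 t htK), hgt]
          exact (Finset.mem_filter.1 hs).2
        · rintro ⟨⟨htK, _⟩, hgt⟩
          exact ⟨htK, hgt⟩
end

section
/- Let Γ = (G,F) be a convenient framed directed graph and let (G_Γ, ∼_Γ, R_Γ) be the associated framed turbulence chart (forget orientations; ∼ separates incoming from outgoing half-edges at each internal vertex; incoming orders are preserved and outgoing orders reversed). Then two routes p, q of Γ are compatible in the framed-DAG sense if and only if their images are compatible in the framed turbulence chart sense; consequently cliques of Γ correspond bijectively to cliques of (G_Γ, ∼_Γ, R_Γ). -/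
/-!
A route of `Γ` is sent to a string of tail half-edges, and its inverse is a string of head
half-edges. The two substrings of an incompatibility start with half-edges whose partners lie in
the same class, so either both substrings lie in the images of the routes or both lie in their
inverses; inverting both substrings preserves incompatibility and reduces the second case to the
first. Strings of tail half-edges are exactly the images of directed paths, and on them the
chart framing is the DAG framing with the outgoing orders reversed, which is what swaps `f₁` and
`f₂` between the two definitions of incompatibility.
-/

open Finset

/-- A finite directed graph. -/
structure DiGraph where
  V : Type
  E : Type
  [fintV : Fintype V]
  [decV : DecidableEq V]
  [fintE : Fintype E]
  [decE : DecidableEq E]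
  src : E → V
  tgt : E → V

attribute [instance] DiGraph.fintV DiGraph.decV DiGraph.fintE DiGraph.decE

namespace DiGraph

variable (G : DiGraph)

/-- A source vertex: no incoming edges. -/
def IsSource (v : G.V) : Prop := ∀ e, G.tgt e ≠ v

/-- A sink vertex: no outgoing edges. -/
def IsSink (v : G.V) : Prop := ∀ e, G.src e ≠ v

def InternalV (v : G.V) : Prop := ¬ G.IsSource v ∧ ¬ G.IsSink v

instance : DecidablePred G.IsSource := fun v =>
  decidable_of_iff (∀ e, G.tgt e ≠ v) Iff.rfl

instance : DecidablePred G.IsSink := fun v =>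
  decidable_of_iff (∀ e, G.src e ≠ v) Iff.rfl

/-- Convenient: every source and every sink vertex is incident to exactly one edge. -/
def Convenient : Prop :=
  (∀ v, G.IsSource v → (Finset.univ.filter fun e => G.src e = v).card = 1) ∧
  (∀ v, G.IsSink v → (Finset.univ.filter fun e => G.tgt e = v).card = 1)

/-- The unit flow polyhedron of a directed graph: nonnegative flows conserving flow at
internal vertices whose total outflow from sources is 1. -/
def unitFlowsD : Set (G.E → ℝ) :=
  {F | (∀ e, 0 ≤ F e) ∧
    (∀ v, G.InternalV v →
      ∑ e ∈ Finset.univ.filter (fun e => G.tgt e = v), F e =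
      ∑ e ∈ Finset.univ.filter (fun e => G.src e = v), F e) ∧
    ∑ e ∈ Finset.univ.filter (fun e => G.IsSource (G.src e)), F e = 1}

end DiGraph

/-- A framing on a directed graph: linear orders on the incoming and on the outgoing
edges at each vertex. -/
structure DFraming (G : DiGraph) where
  ltIn : G.E → G.E → Prop
  ltOut : G.E → G.E → Prop
  in_compat : ∀ a b, ltIn a b → G.tgt a = G.tgt b
  out_compat : ∀ a b, ltOut a b → G.src a = G.src b
  in_irrefl : ∀ a, ¬ ltIn a a
  out_irrefl : ∀ a, ¬ ltOut a a
  in_trans : ∀ a b c, ltIn a b → ltIn b c → ltIn a c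
  out_trans : ∀ a b c, ltOut a b → ltOut b c → ltOut a c
  in_total : ∀ a b, a ≠ b → G.tgt a = G.tgt b → ltIn a b ∨ ltIn b a
  out_total : ∀ a b, a ≠ b → G.src a = G.src b → ltOut a b ∨ ltOut b a

namespace DiGraph

variable (G : DiGraph)

/-- A directed path (consecutive edges compose). -/
def IsPath (l : List G.E) : Prop :=
  List.Chain' (fun a b => G.tgt a = G.src b) l

/-- A route of a directed graph: a maximal directed path, i.e. one from a source
vertex to a sink vertex. -/
def IsRouteD (l : List G.E) : Prop :=
  G.IsPath l ∧ l ≠ [] ∧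
  (∀ e ∈ l.head?, G.IsSource (G.src e)) ∧
  (∀ e ∈ l.getLast?, G.IsSink (G.tgt e))

/-- Incompatibility of routes of a framed directed graph: subpaths `e₁ s f₂` and
`e₂ s f₁` with `e₁ <_in e₂` and `f₁ <_out f₂`. -/
def IncompatD (DF : DFraming G) (p q : List G.E) : Prop :=
  ∃ (e₁ e₂ f₁ f₂ : G.E) (s : List G.E),
    DF.ltIn e₁ e₂ ∧ DF.ltOut f₁ f₂ ∧
    G.IsPath (e₁ :: (s ++ [f₂])) ∧ G.IsPath (e₂ :: (s ++ [f₁])) ∧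
    (((e₁ :: (s ++ [f₂])) <:+: p ∧ (e₂ :: (s ++ [f₁])) <:+: q) ∨
     ((e₁ :: (s ++ [f₂])) <:+: q ∧ (e₂ :: (s ++ [f₁])) <:+: p))

def CompatD (DF : DFraming G) (p q : List G.E) : Prop := ¬ G.IncompatD DF p q

end DiGraph

theorem List.map_eq_cons_append_singleton_iff {α β : Type*} {f : α → β} {l : List α} {b c : β}
    {L : List β} :
    l.map f = b :: (L ++ [c]) ↔
      ∃ a l' d, l = a :: (l' ++ [d]) ∧ f a = b ∧ l'.map f = L ∧ f d = c := by
  simp only [List.map_eq_cons_iff, List.map_eq_append_iff]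
  aesop

namespace TurbChart

variable (T : TurbChart)

/-- The common shape `e₁ s f₁`, `e₂ s f₂` of the two substrings in an incompatibility. -/
def Crossing (R : Framing T) (w₁ w₂ : List T.H) : Prop :=
  ∃ (e₁ e₂ f₁ f₂ : T.H) (s : List T.H),
    w₁ = e₁ :: (s ++ [f₁]) ∧ w₂ = e₂ :: (s ++ [f₂]) ∧
    R.lt (T.op e₁) (T.op e₂) ∧ R.lt f₁ f₂ ∧ T.IsString w₁ ∧ T.IsString w₂

variable {T}

theorem mem_inv {h : T.H} {l : List T.H} : h ∈ T.inv l ↔ T.op h ∈ l := by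
  constructor
  · intro hh
    obtain ⟨a, ha, rfl⟩ := List.mem_map.1 (List.mem_reverse.1 hh)
    rwa [T.op_op]
  · intro hh
    exact List.mem_reverse.2 (List.mem_map.2 ⟨_, hh, T.op_op h⟩)

theorem inv_inv (l : List T.H) : T.inv (T.inv l) = l := by
  simp [inv, List.map_reverse, Function.comp_def, T.op_op]

theorem inv_cons_append (e f : T.H) (s : List T.H) :
    T.inv (e :: (s ++ [f])) = T.op f :: (T.inv s ++ [T.op e]) := by
  simp [inv]

theorem IsString.inv {l : List T.H} (hl : T.IsString l) : T.IsString (T.inv l) := by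
  refine List.isChain_reverse.2 ((List.isChain_map _).2 (List.IsChain.imp ?_ hl))
  intro a b hab
  simp only [T.op_op]
  exact ⟨hab.1.symm, Ne.symm hab.2⟩

theorem inv_infix_inv {w l : List T.H} : T.inv w <:+: T.inv l ↔ w <:+: l := by
  refine ⟨fun h => ?_, fun h => (h.map T.op).reverse⟩
  rw [← T.inv_inv w, ← T.inv_inv l]
  exact (h.map T.op).reverse

theorem Crossing.inv {R : Framing T} {w₁ w₂ : List T.H} (hc : T.Crossing R w₁ w₂) :
    T.Crossing R (T.inv w₁) (T.inv w₂) := by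
  obtain ⟨e₁, e₂, f₁, f₂, s, rfl, rfl, he, hf, hs₁, hs₂⟩ := hc
  refine ⟨T.op f₁, T.op f₂, T.op e₁, T.op e₂, T.inv s, inv_cons_append .., inv_cons_append ..,
    ?_, he, hs₁.inv, hs₂.inv⟩
  rwa [T.op_op, T.op_op]

theorem Crossing.exists_side_op_eq {R : Framing T} {w₁ w₂ : List T.H}
    (hc : T.Crossing R w₁ w₂) :
    ∃ e₁ ∈ w₁, ∃ e₂ ∈ w₂, T.side (T.op e₁) = T.side (T.op e₂) := by
  obtain ⟨e₁, e₂, _, _, _, rfl, rfl, he, -⟩ := hc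
  exact ⟨e₁, List.mem_cons_self, e₂, List.mem_cons_self, (R.lt_compat _ _ he).2⟩

theorem isIncompatPair_route_iff (R : Framing T) (p q : List T.H) :
    T.IsIncompatPair R (p, false) (q, false) ↔
      ∃ w₁ w₂, T.Crossing R w₁ w₂ ∧
        (w₁ <:+: p ∨ w₁ <:+: T.inv p) ∧ (w₂ <:+: q ∨ w₂ <:+: T.inv q) := by
  simp only [IsIncompatPair, Substr, Bool.false_eq_true, if_false]
  constructor
  · rintro ⟨e₁, e₂, f₁, f₂, s, he, hf, hs₁, hs₂, h₁, h₂⟩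
    exact ⟨_, _, ⟨e₁, e₂, f₁, f₂, s, rfl, rfl, he, hf, hs₁, hs₂⟩, h₁, h₂⟩
  · rintro ⟨_, _, ⟨e₁, e₂, f₁, f₂, s, rfl, rfl, he, hf, hs₁, hs₂⟩, h₁, h₂⟩
    exact ⟨e₁, e₂, f₁, f₂, s, he, hf, hs₁, hs₂, h₁, h₂⟩

end TurbChart

namespace DiGraph

variable (G : DiGraph)

def Crossing (DF : DFraming G) (w₁ w₂ : List G.E) : Prop :=
  ∃ (e₁ e₂ f₁ f₂ : G.E) (s : List G.E),
    w₁ = e₁ :: (s ++ [f₂]) ∧ w₂ = e₂ :: (s ++ [f₁]) ∧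
    DF.ltIn e₁ e₂ ∧ DF.ltOut f₁ f₂ ∧ G.IsPath w₁ ∧ G.IsPath w₂

def IsIncompatPairD (DF : DFraming G) (p q : List G.E) : Prop :=
  ∃ w₁ w₂, G.Crossing DF w₁ w₂ ∧ w₁ <:+: p ∧ w₂ <:+: q

variable {G}

theorem incompatD_iff (DF : DFraming G) (p q : List G.E) :
    G.IncompatD DF p q ↔ G.IsIncompatPairD DF p q ∨ G.IsIncompatPairD DF q p := by
  constructor
  · rintro ⟨e₁, e₂, f₁, f₂, s, he, hf, hs₁, hs₂, ⟨h₁, h₂⟩ | ⟨h₁, h₂⟩⟩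
    exacts [.inl ⟨_, _, ⟨e₁, e₂, f₁, f₂, s, rfl, rfl, he, hf, hs₁, hs₂⟩, h₁, h₂⟩,
      .inr ⟨_, _, ⟨e₁, e₂, f₁, f₂, s, rfl, rfl, he, hf, hs₁, hs₂⟩, h₁, h₂⟩]
  · rintro (⟨_, _, ⟨e₁, e₂, f₁, f₂, s, rfl, rfl, he, hf, hs₁, hs₂⟩, h₁, h₂⟩ |
      ⟨_, _, ⟨e₁, e₂, f₁, f₂, s, rfl, rfl, he, hf, hs₁, hs₂⟩, h₁, h₂⟩)
    exacts [⟨e₁, e₂, f₁, f₂, s, he, hf, hs₁, hs₂, .inl ⟨h₁, h₂⟩⟩,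
      ⟨e₁, e₂, f₁, f₂, s, he, hf, hs₁, hs₂, .inr ⟨h₁, h₂⟩⟩]

end DiGraph

/-- `eH.symm (a, false)` is the tail and `eH.symm (a, true)` the head half-edge of `a`. -/
structure IsAssociatedChart (G : DiGraph) (T : TurbChart) (eH : T.H ≃ G.E × Bool)
    (fV : T.V ≃ G.V) : Prop where
  vert_tail : ∀ a, fV (T.vert (eH.symm (a, false))) = G.src a
  vert_head : ∀ a, fV (T.vert (eH.symm (a, true))) = G.tgt a
  op_eq : ∀ a b, T.op (eH.symm (a, b)) = eH.symm (a, !b)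
  side_eq : ∀ a b, T.side (eH.symm (a, b)) = b

structure IsAssociatedFraming {G : DiGraph} {T : TurbChart} (DF : DFraming G) (R : Framing T)
    (eH : T.H ≃ G.E × Bool) : Prop where
  lt_head_iff : ∀ a b, R.lt (eH.symm (a, true)) (eH.symm (b, true)) ↔ DF.ltIn a b
  lt_tail_iff : ∀ a b, R.lt (eH.symm (a, false)) (eH.symm (b, false)) ↔ DF.ltOut b a

namespace IsAssociatedChart

variable {G : DiGraph} {T : TurbChart} {eH : T.H ≃ G.E × Bool} {fV : T.V ≃ G.V}

theorem isString_map_tail (hT : IsAssociatedChart G T eH fV) (l : List G.E) :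
    T.IsString (l.map fun a => eH.symm (a, false)) ↔ G.IsPath l := by
  refine (List.isChain_map _).trans (List.IsChain.iff fun x y => ?_)
  rw [hT.op_eq, Bool.not_false, hT.side_eq, hT.side_eq, ← fV.apply_eq_iff_eq, hT.vert_head,
    hT.vert_tail]
  simp

theorem side_op_of_mem_map_tail (hT : IsAssociatedChart G T eH fV) {h : T.H} {l : List G.E}
    (hh : h ∈ l.map fun a => eH.symm (a, false)) : T.side (T.op h) = true := by
  obtain ⟨a, -, rfl⟩ := List.mem_map.1 hh
  rw [hT.op_eq, hT.side_eq, Bool.not_false]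

theorem side_op_of_mem_inv_map_tail (hT : IsAssociatedChart G T eH fV) {h : T.H}
    {l : List G.E} (hh : h ∈ T.inv (l.map fun a => eH.symm (a, false))) :
    T.side (T.op h) = false := by
  obtain ⟨a, -, ha⟩ := List.mem_map.1 (TurbChart.mem_inv.1 hh)
  rw [← ha, hT.side_eq]

theorem crossing_map_tail_iff (hT : IsAssociatedChart G T eH fV) {DF : DFraming G}
    {R : Framing T} (hR : IsAssociatedFraming DF R eH) (u₁ u₂ : List G.E) :
    T.Crossing R (u₁.map fun a => eH.symm (a, false)) (u₂.map fun a => eH.symm (a, false)) ↔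
      G.Crossing DF u₁ u₂ := by
  have hinj : Function.Injective fun a : G.E => eH.symm (a, false) := fun a b h => by
    simpa using h
  constructor
  · rintro ⟨e₁, e₂, f₁, f₂, s, h₁, h₂, he, hf, hs₁, hs₂⟩
    obtain ⟨x₁, σ₁, y₁, rfl, rfl, rfl, rfl⟩ := List.map_eq_cons_append_singleton_iff.1 h₁
    obtain ⟨x₂, σ₂, y₂, rfl, rfl, hσ, rfl⟩ := List.map_eq_cons_append_singleton_iff.1 h₂
    obtain rfl := List.map_injective_iff.2 hinj hσ
    rw [hT.op_eq, hT.op_eq] at he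
    exact ⟨x₁, x₂, y₂, y₁, _, rfl, rfl, (hR.lt_head_iff _ _).1 he, (hR.lt_tail_iff _ _).1 hf,
      (hT.isString_map_tail _).1 hs₁, (hT.isString_map_tail _).1 hs₂⟩
  · rintro ⟨e₁, e₂, f₁, f₂, s, rfl, rfl, he, hf, hp₁, hp₂⟩
    refine ⟨eH.symm (e₁, false), eH.symm (e₂, false), eH.symm (f₂, false), eH.symm (f₁, false),
      s.map fun a => eH.symm (a, false), by simp, by simp, ?_,
      (hR.lt_tail_iff _ _).2 hf, (hT.isString_map_tail _).2 hp₁, (hT.isString_map_tail _).2 hp₂⟩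
    rw [hT.op_eq, hT.op_eq]
    exact (hR.lt_head_iff _ _).2 he

theorem isIncompatPair_map_tail_iff (hT : IsAssociatedChart G T eH fV) {DF : DFraming G}
    {R : Framing T} (hR : IsAssociatedFraming DF R eH) (p q : List G.E) :
    T.IsIncompatPair R (p.map fun a => eH.symm (a, false), false)
        (q.map fun a => eH.symm (a, false), false) ↔ G.IsIncompatPairD DF p q := by
  have of_infix_map {w₁ w₂} (hc : T.Crossing R w₁ w₂) (h₁ : w₁ <:+: p.map fun a => eH.symm (a, false))
      (h₂ : w₂ <:+: q.map fun a => eH.symm (a, false)) : G.IsIncompatPairD DF p q := by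
    obtain ⟨u₁, hu₁, rfl⟩ := List.infix_map_iff.1 h₁
    obtain ⟨u₂, hu₂, rfl⟩ := List.infix_map_iff.1 h₂
    exact ⟨u₁, u₂, (hT.crossing_map_tail_iff hR u₁ u₂).1 hc, hu₁, hu₂⟩
  rw [TurbChart.isIncompatPair_route_iff]
  constructor
  · rintro ⟨w₁, w₂, hc, h₁ | h₁, h₂ | h₂⟩
    · exact of_infix_map hc h₁ h₂
    · obtain ⟨e₁, he₁, e₂, he₂, hside⟩ := hc.exists_side_op_eq
      rw [hT.side_op_of_mem_map_tail (h₁.subset he₁),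
        hT.side_op_of_mem_inv_map_tail (h₂.subset he₂)] at hside
      cases hside
    · obtain ⟨e₁, he₁, e₂, he₂, hside⟩ := hc.exists_side_op_eq
      rw [hT.side_op_of_mem_inv_map_tail (h₁.subset he₁),
        hT.side_op_of_mem_map_tail (h₂.subset he₂)] at hside
      cases hside
    · rw [← TurbChart.inv_infix_inv, TurbChart.inv_inv] at h₁ h₂
      exact of_infix_map hc.inv h₁ h₂
  · rintro ⟨u₁, u₂, hc, hu₁, hu₂⟩
    exact ⟨_, _, (hT.crossing_map_tail_iff hR u₁ u₂).2 hc, .inl (hu₁.map _), .inl (hu₂.map _)⟩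

theorem compatible_map_tail_iff (hT : IsAssociatedChart G T eH fV) {DF : DFraming G}
    {R : Framing T} (hR : IsAssociatedFraming DF R eH) (p q : List G.E) :
    T.Compatible R (p.map fun a => eH.symm (a, false), false)
        (q.map fun a => eH.symm (a, false), false) ↔ G.CompatD DF p q := by
  rw [TurbChart.Compatible, DiGraph.CompatD, DiGraph.incompatD_iff,
    hT.isIncompatPair_map_tail_iff hR, hT.isIncompatPair_map_tail_iff hR]

end IsAssociatedChart

theorem framed_digraph_compatibility_corresponds_general
    (G : DiGraph) (DF : DFraming G) (T : TurbChart) (R : Framing T)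
    (eH : T.H ≃ G.E × Bool) (fV : T.V ≃ G.V)
    (hvert : ∀ a : G.E, fV (T.vert (eH.symm (a, false))) = G.src a ∧
      fV (T.vert (eH.symm (a, true))) = G.tgt a)
    (hop : ∀ (a : G.E) (b : Bool), T.op (eH.symm (a, b)) = eH.symm (a, !b))
    (hside : ∀ (a : G.E) (b : Bool), T.side (eH.symm (a, b)) = b)
    (hltIn : ∀ a b : G.E,
      R.lt (eH.symm (a, true)) (eH.symm (b, true)) ↔ DF.ltIn a b)
    (hltOut : ∀ a b : G.E,
      R.lt (eH.symm (a, false)) (eH.symm (b, false)) ↔ DF.ltOut b a) :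
    (∀ p q : List G.E, G.IsRouteD p → G.IsRouteD q →
      (G.CompatD DF p q ↔
        T.Compatible R (p.map (fun a => eH.symm (a, false)), false)
          (q.map (fun a => eH.symm (a, false)), false))) ∧
    (∀ S : Finset (List G.E), (∀ p ∈ S, G.IsRouteD p) →
      ((∀ p ∈ S, ∀ q ∈ S, G.CompatD DF p q) ↔
        (∀ p ∈ S, ∀ q ∈ S,
          T.Compatible R (p.map (fun a => eH.symm (a, false)), false)
            (q.map (fun a => eH.symm (a, false)), false)))) := by
  have hT : IsAssociatedChart G T eH fV :=
    ⟨fun a => (hvert a).1, fun a => (hvert a).2, hop, hside⟩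
  have hcompat p q := (hT.compatible_map_tail_iff ⟨hltIn, hltOut⟩ p q).symm
  exact ⟨fun p q _ _ => hcompat p q,
    fun _ _ => forall₂_congr fun p _ => forall₂_congr fun q _ => hcompat p q⟩

/-- For a convenient framed directed graph `Γ = (G, DF)` and its
associated framed turbulence chart `(T, R)` (forget orientations, separate incoming
from outgoing half-edges, preserve incoming orders and reverse outgoing orders), two
routes of `Γ` are compatible in the framed-DAG sense iff their images are compatible
in the framed-turbulence-chart sense; consequently cliques correspond. -/
theorem framed_digraph_compatibility_corresponds
    (G : DiGraph) (DF : DFraming G) (T : TurbChart) (R : Framing T)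
    (hconv : G.Convenient)
    (eH : T.H ≃ G.E × Bool) (fV : T.V ≃ G.V)
    (hvert : ∀ a : G.E, fV (T.vert (eH.symm (a, false))) = G.src a ∧
      fV (T.vert (eH.symm (a, true))) = G.tgt a)
    (hop : ∀ (a : G.E) (b : Bool), T.op (eH.symm (a, b)) = eH.symm (a, !b))
    (hside : ∀ (a : G.E) (b : Bool), T.side (eH.symm (a, b)) = b)
    (hltIn : ∀ a b : G.E,
      R.lt (eH.symm (a, true)) (eH.symm (b, true)) ↔ DF.ltIn a b)
    (hltOut : ∀ a b : G.E,
      R.lt (eH.symm (a, false)) (eH.symm (b, false)) ↔ DF.ltOut b a) :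
    (∀ p q : List G.E, G.IsRouteD p → G.IsRouteD q →
      (G.CompatD DF p q ↔
        T.Compatible R (p.map (fun a => eH.symm (a, false)), false)
          (q.map (fun a => eH.symm (a, false)), false))) ∧
    (∀ S : Finset (List G.E), (∀ p ∈ S, G.IsRouteD p) →
      ((∀ p ∈ S, ∀ q ∈ S, G.CompatD DF p q) ↔
        (∀ p ∈ S, ∀ q ∈ S,
          T.Compatible R (p.map (fun a => eH.symm (a, false)), false)
            (q.map (fun a => eH.symm (a, false)), false)))) :=
  framed_digraph_compatibility_corresponds_general G DF T R eH fV hvert hop hside hltIn hltOut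
end
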